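/- arXiv:2301.13285 — 9 statements merged into one kernel-verified Lean document; each statement's English description precedes it below -/
import Mathlib

section
/- For every local dimension d ∈ {2, 4, 8} and every unit vector ψ in ℂ^d ⊗ ℂ^d, there exist d² pairs (A_j, B_j) (j = 1, …, d²) of d×d complex unitary matrices such that the d² vectors (A_j ⊗ B_j)ψ form an orthonormal basis of ℂ^d ⊗ ℂ^d (equivalently, of ℂ^{d²}). -/
open Matrix
open scoped Kronecker

def IsONBasis {ι κ : Type*} [Fintype ι] [DecidableEq ι] [Fintype κ] (v : ι → κ → ℂ) : Prop :=
  (∀ j j', star (v j) ⬝ᵥ v j' = if j = j' then 1 else 0) ∧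
    Submodule.span ℂ (Set.range v) = ⊤

/-!
Read `ψ` as a `d × d` matrix `M`, so that `(A ⊗ B) ψ` is `B M Aᵀ`, and take a singular value
decomposition `M = U Σ V*`. For `B = X_a U*` and `A = Y_b Vᵀ` the vectors become `X_a Σ Y_bᵀ`,
and their inner products are the quadratic forms `σᵀ ((X_a* X_a') ⊙ (Y_b* Y_b')) σ` in the
singular values `σ`. Such a form vanishes when the Hadamard product is skew-symmetric. This
happens for `(a, b) ≠ (a', b')` when the `X_a` are the permutation matrices of `j ↦ a xor j`
(so `X_a* X_a'` is symmetric, with zero diagonal for `a ≠ a'`) and the `Y_b` are left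
multiplications by basis octonions `e_b`, which form a Hurwitz–Radon family: `Y_b* Y_b'` is
skew-symmetric for `b ≠ b'`. Real families of `d` such matrices of size `d` exist only for
`d = 1, 2, 4, 8`.
-/

open scoped InnerProductSpace in
theorem exists_orthonormalBasis_smul_eq_of_pairwise_inner_eq_zero {𝕜 E n : Type*} [RCLike 𝕜]
    [NormedAddCommGroup E] [InnerProductSpace 𝕜 E] [FiniteDimensional 𝕜 E] [Fintype n]
    (hcard : Module.finrank 𝕜 E = Fintype.card n) (f : n → E)
    (hf : Pairwise fun i j => ⟪f i, f j⟫_𝕜 = 0) :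
    ∃ b : OrthonormalBasis n 𝕜 E, ∀ i, f i = (‖f i‖ : 𝕜) • b i := by
  let e := Fintype.equivFin n
  have hcard' : Module.finrank 𝕜 E = Fintype.card (Fin (Fintype.card n)) := by simpa using hcard
  have hf' : Pairwise fun i j => ⟪(f ∘ e.symm) i, (f ∘ e.symm) j⟫_𝕜 = 0 :=
    fun i j hij => hf (e.symm.injective.ne hij)
  refine ⟨(InnerProductSpace.gramSchmidtOrthonormalBasis hcard' (f ∘ e.symm)).reindex e.symm,
    fun i => ?_⟩
  by_cases hi : f i = 0
  · simp [hi]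
  · rw [OrthonormalBasis.reindex_apply, Equiv.symm_symm,
      InnerProductSpace.gramSchmidtOrthonormalBasis_apply_of_orthogonal hcard' hf' (i := e i)
        (by simpa using hi)]
    simp only [Function.comp_apply, Equiv.symm_apply_apply, smul_smul]
    rw [mul_inv_cancel₀ (by simpa using hi), one_smul]

namespace Matrix

variable {R n : Type*} [Fintype n]

open scoped InnerProductSpace in
theorem exists_unitary_mul_diagonal_of_isDiag_conjTranspose_mul_self {𝕜 : Type*} [RCLike 𝕜]
    [DecidableEq n] {N : Matrix n n 𝕜} (hN : (Nᴴ * N).IsDiag) :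
    ∃ U ∈ unitaryGroup n 𝕜, ∃ σ : n → ℝ, N = U * diagonal (RCLike.ofReal ∘ σ) := by
  let f : n → EuclideanSpace 𝕜 n := fun i => WithLp.toLp 2 (fun k => N k i)
  have hf : Pairwise fun i j => ⟪f i, f j⟫_𝕜 = 0 := fun i j hij => by
    simpa [f, EuclideanSpace.inner_toLp_toLp, mul_apply, dotProduct, mul_comm] using hN hij
  obtain ⟨b, hb⟩ := exists_orthonormalBasis_smul_eq_of_pairwise_inner_eq_zero (by simp) f hf
  refine ⟨(EuclideanSpace.basisFun n 𝕜).toBasis.toMatrix b,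
    (EuclideanSpace.basisFun n 𝕜).toMatrix_orthonormalBasis_mem_unitary b, fun i => ‖f i‖, ?_⟩
  ext k i
  simpa [Module.Basis.toMatrix_apply, f, RCLike.real_smul_eq_coe_mul, mul_comm]
    using congrArg (· k) (hb i)

theorem exists_svd {𝕜 : Type*} [RCLike 𝕜] [DecidableEq n] (M : Matrix n n 𝕜) :
    ∃ U ∈ unitaryGroup n 𝕜, ∃ V ∈ unitaryGroup n 𝕜, ∃ σ : n → ℝ,
      M = U * diagonal (RCLike.ofReal ∘ σ) * Vᴴ := by
  have hH : (Mᴴ * M).IsHermitian := isHermitian_conjTranspose_mul_self M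
  set W : Matrix n n 𝕜 := (hH.eigenvectorUnitary : Matrix n n 𝕜)
  have hW : W ∈ unitaryGroup n 𝕜 := hH.eigenvectorUnitary.2
  have hdiag : ((M * W)ᴴ * (M * W)).IsDiag := by
    have := hH.conjStarAlgAut_star_eigenvectorUnitary
    rw [Unitary.conjStarAlgAut_star_apply] at this
    rw [conjTranspose_mul, ← star_eq_conjTranspose W, Matrix.mul_assoc, ← Matrix.mul_assoc Mᴴ,
      ← Matrix.mul_assoc, this]
    exact isDiag_diagonal _
  obtain ⟨U, hU, σ, hMW⟩ := exists_unitary_mul_diagonal_of_isDiag_conjTranspose_mul_self hdiag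
  refine ⟨U, hU, W, hW, σ, ?_⟩
  rw [← hMW, Matrix.mul_assoc, ← star_eq_conjTranspose, mem_unitaryGroup_iff.mp hW, Matrix.mul_one]

theorem star_vec_dotProduct_vec_mul_diagonal_mul [DecidableEq n] [CommRing R] [StarRing R]
    {σ : n → R} (hσ : star σ = σ) (P Q P' Q' : Matrix n n R) :
    star (vec (P * diagonal σ * Qᵀ)) ⬝ᵥ vec (P' * diagonal σ * Q'ᵀ) =
      σ ᵥ* ((Pᴴ * P') ⊙ (Qᴴ * Q')) ⬝ᵥ σ := by
  have hD : (diagonal σ)ᴴ = diagonal σ := by rw [diagonal_conjTranspose, hσ]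
  rw [star_vec_dotProduct_vec, dotProduct_vecMul_hadamard, conjTranspose_mul, conjTranspose_mul,
    hD, transpose_mul, diagonal_transpose, transpose_mul, transpose_conjTranspose,
    conjTranspose_transpose, Matrix.mul_assoc (Q.map star), trace_mul_comm (Q.map star)]
  simp only [Matrix.mul_assoc]

theorem vecMul_dotProduct_self_eq_zero_of_transpose_eq_neg [CommRing R] [NoZeroDivisors R]
    [CharZero R] {K : Matrix n n R} (hK : Kᵀ = -K) (v : n → R) : v ᵥ* K ⬝ᵥ v = 0 := by
  refine self_eq_neg.mp ?_
  calc v ᵥ* K ⬝ᵥ v = v ᵥ* Kᵀ ⬝ᵥ v := by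
        rw [vecMul_transpose, ← dotProduct_mulVec, dotProduct_comm]
    _ = -(v ᵥ* K ⬝ᵥ v) := by rw [hK, vecMul_neg, neg_dotProduct]

end Matrix

theorem isONBasis_of_orthonormal_of_card_eq {ι κ : Type*} [Fintype ι] [DecidableEq ι]
    [Fintype κ] {v : ι → κ → ℂ} (hv : ∀ j j', star (v j) ⬝ᵥ v j' = if j = j' then 1 else 0)
    (hcard : Fintype.card ι = Fintype.card κ) : IsONBasis v := by
  have hON : Orthonormal ℂ fun j => WithLp.toLp 2 (v j) := by
    rw [orthonormal_iff_ite]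
    intro j j'
    rw [EuclideanSpace.inner_toLp_toLp, dotProduct_comm, hv]
  have hli : LinearIndependent ℂ v :=
    hON.linearIndependent.map' (WithLp.linearEquiv 2 ℂ (κ → ℂ)).toLinearMap
      (WithLp.linearEquiv 2 ℂ (κ → ℂ)).ker
  exact ⟨hv, hli.span_eq_top_of_card_eq_finrank' (by simpa using hcard)⟩

theorem IsONBasis.comp_equiv {ι ι' κ : Type*} [Fintype ι] [DecidableEq ι] [Fintype ι']
    [DecidableEq ι'] [Fintype κ] {v : ι → κ → ℂ} (hv : IsONBasis v) (e : ι' ≃ ι) :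
    IsONBasis (v ∘ e) :=
  ⟨fun j j' => by simpa [e.injective.eq_iff] using hv.1 (e j) (e j'), by
    rw [Set.range_comp, e.range_eq_univ, Set.image_univ, hv.2]⟩

theorem exists_isONBasis_kronecker_mulVec {n α β : Type*} [Fintype n] [DecidableEq n]
    [Fintype α] [DecidableEq α] [Fintype β] [DecidableEq β]
    {X : α → Matrix n n ℂ} {Y : β → Matrix n n ℂ}
    (hX : ∀ a, X a ∈ unitaryGroup n ℂ) (hY : ∀ b, Y b ∈ unitaryGroup n ℂ)
    (hX_symm : ∀ a a', ((X a)ᴴ * X a').IsSymm)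
    (hX_diag : ∀ a a', a ≠ a' → ((X a)ᴴ * X a').diag = 0)
    (hY_skew : ∀ b b', b ≠ b' → ((Y b)ᴴ * Y b')ᵀ = -((Y b)ᴴ * Y b'))
    (hcard : Fintype.card (α × β) = Fintype.card (n × n))
    (ψ : n × n → ℂ) (hψ : star ψ ⬝ᵥ ψ = 1) :
    ∃ A B : α × β → Matrix n n ℂ,
      (∀ p, A p ∈ unitaryGroup n ℂ ∧ B p ∈ unitaryGroup n ℂ) ∧
      IsONBasis (fun p => (A p ⊗ₖ B p) *ᵥ ψ) := by
  have hunitary : ∀ W ∈ unitaryGroup n ℂ, Wᴴ * W = 1 := fun W hW => by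
    rw [← star_eq_conjTranspose]; exact mem_unitaryGroup_iff'.mp hW
  obtain ⟨U, hU, V, hV, σ, hM⟩ := exists_svd (of fun i j => ψ (j, i))
  set D := diagonal (RCLike.ofReal ∘ σ : n → ℂ)
  have hσ : star (RCLike.ofReal ∘ σ : n → ℂ) = RCLike.ofReal ∘ σ :=
    funext fun i => RCLike.conj_ofReal _
  have hψ_vec : ψ = vec (U * D * (Vᴴᵀ)ᵀ) := by
    rw [transpose_transpose, ← hM]; rfl
  have hw : ∀ p : α × β, ((Y p.2 * Vᵀ) ⊗ₖ (X p.1 * Uᴴ)) *ᵥ ψ = vec (X p.1 * D * (Y p.2)ᵀ) := by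
    intro p
    rw [hψ_vec, kronecker_mulVec_vec, transpose_transpose, transpose_mul, transpose_transpose]
    simp only [Matrix.mul_assoc]
    rw [← Matrix.mul_assoc Uᴴ, hunitary U hU, Matrix.one_mul,
      ← Matrix.mul_assoc Vᴴ, hunitary V hV, Matrix.one_mul]
  have hVt : Vᴴᵀ ∈ unitaryGroup n ℂ := transpose_mem_unitaryGroup_iff.mpr
    (by simpa [star_eq_conjTranspose] using Unitary.star_mem hV)
  rw [hψ_vec, star_vec_dotProduct_vec_mul_diagonal_mul hσ, hunitary U hU, hunitary _ hVt] at hψ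
  refine ⟨fun p => Y p.2 * Vᵀ, fun p => X p.1 * Uᴴ, fun p => ⟨?_, ?_⟩,
    isONBasis_of_orthonormal_of_card_eq ?_ hcard⟩
  · exact mul_mem (hY _) (transpose_mem_unitaryGroup_iff.mpr hV)
  · exact mul_mem (hX _) (by simpa [star_eq_conjTranspose] using Unitary.star_mem hU)
  rintro ⟨a, b⟩ ⟨a', b'⟩
  rw [hw, hw, star_vec_dotProduct_vec_mul_diagonal_mul hσ]
  split_ifs with h
  · obtain ⟨rfl, rfl⟩ := Prod.mk.inj h
    rwa [hunitary _ (hX a), hunitary _ (hY b)]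
  refine vecMul_dotProduct_self_eq_zero_of_transpose_eq_neg ?_ _
  by_cases hb : b = b'
  · subst hb
    have ha : a ≠ a' := fun ha => h (by rw [ha])
    rw [hunitary _ (hY b), hadamard_one, hX_diag a a' ha]
    simp
  · rw [transpose_hadamard, (hX_symm a a').eq, hY_skew b b' hb]
    ext i j
    simp [hadamard_apply]

theorem Nat.xor_eq_xor_swap {a b i j : ℕ} (h : a ^^^ i = b ^^^ j) : a ^^^ j = b ^^^ i := by
  calc a ^^^ j = a ^^^ i ^^^ (i ^^^ j) := by rw [Nat.xor_assoc, xor_cancel_left]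
    _ = b ^^^ j ^^^ (j ^^^ i) := by rw [h, Nat.xor_comm i j]
    _ = b ^^^ i := by rw [Nat.xor_assoc, xor_cancel_left]

def xorMatrix {k : ℕ} (s : Fin (2 ^ k) → ℤ) (b : Fin (2 ^ k)) :
    Matrix (Fin (2 ^ k)) (Fin (2 ^ k)) ℂ :=
  of fun i j => if i.val = b.val ^^^ j.val then (s j : ℂ) else 0

section xorMatrix

variable {k : ℕ}

theorem xorMatrix_conjTranspose_mul_apply (s t : Fin (2 ^ k) → ℤ) (b c i j : Fin (2 ^ k)) :
    ((xorMatrix s b)ᴴ * xorMatrix t c) i j =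
      if b.val ^^^ i.val = c.val ^^^ j.val then (s i * t j : ℂ) else 0 := by
  rw [mul_apply, Finset.sum_eq_single ⟨b.val ^^^ i.val, Nat.xor_lt_two_pow b.2 i.2⟩]
  · simp [xorMatrix]
  · intro l _ hl
    have : l.val ≠ b.val ^^^ i.val := fun h => hl (Fin.ext h)
    simp [xorMatrix, this]
  · simp

theorem xorMatrix_mem_unitaryGroup {s : Fin (2 ^ k) → ℤ} (hs : ∀ i, s i * s i = 1)
    (b : Fin (2 ^ k)) : xorMatrix s b ∈ unitaryGroup (Fin (2 ^ k)) ℂ := by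
  rw [mem_unitaryGroup_iff', star_eq_conjTranspose]
  ext i j
  rw [xorMatrix_conjTranspose_mul_apply, one_apply]
  by_cases hij : i = j
  · subst hij
    simp only [if_true]
    exact_mod_cast hs i
  · have : b.val ^^^ i.val ≠ b.val ^^^ j.val := fun h => hij (Fin.ext (Nat.xor_right_inj.mp h))
    rw [if_neg this, if_neg hij]

theorem xorMatrix_one_conjTranspose_mul_isSymm (a a' : Fin (2 ^ k)) :
    ((xorMatrix 1 a)ᴴ * xorMatrix 1 a').IsSymm :=
  IsSymm.ext fun i j => by
    simp only [xorMatrix_conjTranspose_mul_apply]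
    exact if_congr ⟨Nat.xor_eq_xor_swap, Nat.xor_eq_xor_swap⟩ (by simp) rfl

theorem xorMatrix_one_conjTranspose_mul_diag {a a' : Fin (2 ^ k)} (h : a ≠ a') :
    ((xorMatrix 1 a)ᴴ * xorMatrix 1 a').diag = 0 := by
  ext i
  have : a.val ^^^ i.val ≠ a'.val ^^^ i.val := fun h' => h (Fin.ext (Nat.xor_left_inj.mp h'))
  rw [diag_apply, xorMatrix_conjTranspose_mul_apply, if_neg this, Pi.zero_apply]

theorem xorMatrix_conjTranspose_mul_transpose {s : Fin (2 ^ k) → Fin (2 ^ k) → ℤ}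
    (hs : ∀ b b' i j : Fin (2 ^ k), b ≠ b' → b.val ^^^ i.val = b'.val ^^^ j.val →
      s b i * s b' j + s b j * s b' i = 0)
    {b b' : Fin (2 ^ k)} (h : b ≠ b') :
    ((xorMatrix (s b) b)ᴴ * xorMatrix (s b') b')ᵀ =
      -((xorMatrix (s b) b)ᴴ * xorMatrix (s b') b') := by
  ext i j
  rw [transpose_apply, neg_apply, xorMatrix_conjTranspose_mul_apply,
    xorMatrix_conjTranspose_mul_apply]
  by_cases hij : b.val ^^^ i.val = b'.val ^^^ j.val
  · rw [if_pos (Nat.xor_eq_xor_swap hij), if_pos hij, eq_neg_iff_add_eq_zero, add_comm]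
    exact_mod_cast hs b b' i j h hij
  · rw [if_neg (fun h' => hij (Nat.xor_eq_xor_swap h')), if_neg hij, neg_zero]

end xorMatrix

/-- `e_a * e_b = octonionSign a b • e_(a ^^^ b)` in the standard basis `e_0 = 1, …, e_7` of the
octonions, so `xorMatrix (octonionSign b) b` is left multiplication by `e_b`. -/
def octonionSign : Fin 8 → Fin 8 → ℤ :=
  ![![1, 1, 1, 1, 1, 1, 1, 1], ![1, -1, 1, -1, 1, -1, -1, 1], ![1, -1, -1, 1, 1, 1, -1, -1],
    ![1, 1, -1, -1, 1, -1, 1, -1], ![1, -1, -1, -1, -1, 1, 1, 1], ![1, 1, -1, 1, -1, -1, -1, 1],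
    ![1, 1, 1, -1, -1, 1, -1, -1], ![1, -1, 1, 1, -1, -1, 1, -1]]

theorem octonionSign_mul_self (a b : Fin 8) : octonionSign a b * octonionSign a b = 1 := by
  revert a b; decide

theorem octonionSign_mul_add_mul_eq_zero :
    ∀ b b' i j : Fin 8, b ≠ b' → b.val ^^^ i.val = b'.val ^^^ j.val →
      octonionSign b i * octonionSign b' j + octonionSign b j * octonionSign b' i = 0 := by
  decide

theorem exists_isONBasis_kronecker_mulVec_of_le_three {k : ℕ} (hk : k ≤ 3)
    (ψ : Fin (2 ^ k) × Fin (2 ^ k) → ℂ) (hψ : star ψ ⬝ᵥ ψ = 1) :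
    ∃ A B : Fin (2 ^ k) × Fin (2 ^ k) → Matrix (Fin (2 ^ k)) (Fin (2 ^ k)) ℂ,
      (∀ p, A p ∈ unitaryGroup (Fin (2 ^ k)) ℂ ∧ B p ∈ unitaryGroup (Fin (2 ^ k)) ℂ) ∧
      IsONBasis (fun p => (A p ⊗ₖ B p) *ᵥ ψ) := by
  have h8 : 2 ^ k ≤ 8 := Nat.pow_le_pow_right two_pos hk
  let s : Fin (2 ^ k) → Fin (2 ^ k) → ℤ := fun b i =>
    octonionSign (b.castLE h8) (i.castLE h8)
  have hs : ∀ b b' i j : Fin (2 ^ k), b ≠ b' → b.val ^^^ i.val = b'.val ^^^ j.val →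
      s b i * s b' j + s b j * s b' i = 0 := fun b b' i j hb h =>
    octonionSign_mul_add_mul_eq_zero _ _ _ _ (by simpa [Fin.ext_iff] using hb) h
  exact exists_isONBasis_kronecker_mulVec (X := xorMatrix 1) (Y := fun b => xorMatrix (s b) b)
    (xorMatrix_mem_unitaryGroup fun _ => rfl)
    (fun b => xorMatrix_mem_unitaryGroup (fun _ => octonionSign_mul_self _ _) b)
    xorMatrix_one_conjTranspose_mul_isSymm (fun _ _ => xorMatrix_one_conjTranspose_mul_diag)
    (fun _ _ => xorMatrix_conjTranspose_mul_transpose hs) rfl ψ hψ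

/-- For local dimension `d ∈ {2,4,8}`, every unit vector `ψ` in `ℂ^d ⊗ ℂ^d` admits a
`ψ`-basis: there are `d²` pairs of `d×d` unitaries `(A j, B j)` such that the vectors
`(A j ⊗ B j) ψ` form an orthonormal basis of `ℂ^d ⊗ ℂ^d`. -/
theorem stmt0 (d : ℕ) (hd : d = 2 ∨ d = 4 ∨ d = 8)
    (ψ : Fin d × Fin d → ℂ) (hψ : star ψ ⬝ᵥ ψ = 1) :
    ∃ A B : Fin (d ^ 2) → Matrix (Fin d) (Fin d) ℂ,
      (∀ j, A j ∈ Matrix.unitaryGroup (Fin d) ℂ ∧ B j ∈ Matrix.unitaryGroup (Fin d) ℂ) ∧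
      IsONBasis (fun j => (A j ⊗ₖ B j) *ᵥ ψ) := by
  obtain ⟨k, hk, rfl⟩ : ∃ k ≤ 3, d = 2 ^ k := by
    rcases hd with rfl | rfl | rfl
    exacts [⟨1, by norm_num, rfl⟩, ⟨2, by norm_num, rfl⟩, ⟨3, le_rfl, rfl⟩]
  obtain ⟨A, B, hAB, hON⟩ := exists_isONBasis_kronecker_mulVec_of_le_three hk ψ hψ
  let e : Fin ((2 ^ k) ^ 2) ≃ Fin (2 ^ k) × Fin (2 ^ k) :=
    (finCongr (sq _)).trans finProdFinEquiv.symm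
  exact ⟨A ∘ e, B ∘ e, fun j => hAB (e j), hON.comp_equiv e⟩
end

section
/- For every local dimension d ∈ {2, 4, 8} there exist d² pairs (A_j, B_j) (j = 1, …, d²) of d×d complex unitary matrices, independent of the Schmidt coefficients, such that for every vector λ ∈ ℝ^d with ∑_{l} λ_l² = 1, the d² vectors (A_j ⊗ B_j)(∑_{l=0}^{d-1} λ_l e_l ⊗ e_l) form an orthonormal basis of ℂ^d ⊗ ℂ^d. Here e_l denotes the standard basis of ℂ^d. -/
open Matrix
open scoped Kronecker

def octTab : List (List ℤ) :=
  [[1, 1, 1, 1, 1, 1, 1, 1],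
   [1, -1, 1, -1, 1, -1, -1, 1],
   [1, -1, -1, 1, 1, 1, -1, -1],
   [1, 1, -1, -1, 1, -1, 1, -1],
   [1, -1, -1, -1, -1, 1, 1, 1],
   [1, 1, -1, 1, -1, -1, -1, 1],
   [1, 1, 1, -1, -1, 1, -1, -1],
   [1, -1, 1, 1, -1, -1, 1, -1]]

def epsOf (a l : ℕ) : ℤ := (octTab.getD a []).getD l 0

def eps2 : ZMod 2 → ZMod 2 → ℤ := fun a l => epsOf a.val l.val

def eps4 : ZMod 2 × ZMod 2 → ZMod 2 × ZMod 2 → ℤ :=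
  fun a l => epsOf (a.1.val * 2 + a.2.val) (l.1.val * 2 + l.2.val)

def eps8 : ZMod 2 × ZMod 2 × ZMod 2 → ZMod 2 × ZMod 2 × ZMod 2 → ℤ :=
  fun a l => epsOf (a.1.val * 4 + a.2.1.val * 2 + a.2.2.val)
    (l.1.val * 4 + l.2.1.val * 2 + l.2.2.val)

lemma rearr {n : Type*} [Fintype n] (f g f' g' : n → n → ℂ) (w w' : n → ℂ) :
    (∑ p : n × n, (∑ l, f p.1 l * g p.2 l * w l) * (∑ m, f' p.1 m * g' p.2 m * w' m))
      = ∑ l, ∑ m, (w l * w' m) *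
          ((∑ k1, f k1 l * f' k1 m) * (∑ k2, g k2 l * g' k2 m)) := by
  calc (∑ p : n × n, (∑ l, f p.1 l * g p.2 l * w l) * (∑ m, f' p.1 m * g' p.2 m * w' m))
      = ∑ p : n × n, ∑ l, ∑ m, (f p.1 l * g p.2 l * w l) * (f' p.1 m * g' p.2 m * w' m) := by
        exact Finset.sum_congr rfl fun p _ => Finset.sum_mul_sum _ _ _ _
    _ = ∑ l, ∑ p : n × n, ∑ m, (f p.1 l * g p.2 l * w l) * (f' p.1 m * g' p.2 m * w' m) :=
        Finset.sum_comm
    _ = ∑ l, ∑ m, ∑ p : n × n, (f p.1 l * g p.2 l * w l) * (f' p.1 m * g' p.2 m * w' m) :=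
        Finset.sum_congr rfl fun l _ => Finset.sum_comm
    _ = ∑ l, ∑ m, (w l * w' m) *
          ((∑ k1, f k1 l * f' k1 m) * (∑ k2, g k2 l * g' k2 m)) := by
        refine Finset.sum_congr rfl fun l _ => Finset.sum_congr rfl fun m _ => ?_
        rw [Fintype.sum_prod_type]
        conv_rhs => rw [Finset.sum_mul_sum, Finset.mul_sum]
        refine Finset.sum_congr rfl fun k1 _ => ?_
        rw [Finset.mul_sum]
        exact Finset.sum_congr rfl fun k2 _ => by ring

lemma master (d : ℕ) (G : Type) [Fintype G] [DecidableEq G] [AddCommGroup G]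
    (htwo : ∀ g : G, g + g = 0) (e : Fin d ≃ G) (ε : G → G → ℤ)
    (hε2 : ∀ a l, ε a l * ε a l = 1)
    (hskew : ∀ a a' l : G, a ≠ a' →
      ε a l * ε a' (a + a' + l) + ε a (a + a' + l) * ε a' l = 0) :
    ∃ A B : Fin (d ^ 2) → Matrix (Fin d) (Fin d) ℂ,
      (∀ j, A j ∈ Matrix.unitaryGroup (Fin d) ℂ ∧ B j ∈ Matrix.unitaryGroup (Fin d) ℂ) ∧
      ∀ lam : Fin d → ℝ, (∑ l, lam l ^ 2) = 1 →
        IsONBasis (fun j =>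
          (A j ⊗ₖ B j) *ᵥ (fun p : Fin d × Fin d => if p.1 = p.2 then (lam p.1 : ℂ) else 0)) := by
  have hG : Fintype.card G = d := by
    rw [← Fintype.card_congr e, Fintype.card_fin]
  have hq : Fintype.card (Fin (d ^ 2)) = Fintype.card (G × G) := by
    rw [Fintype.card_fin, Fintype.card_prod, hG, sq]
  obtain q := Fintype.equivOfCardEq hq
  have hcanc : ∀ x y : G, x + (x + y) = y := by
    intro x y; rw [← add_assoc, htwo, zero_add]
  set A : Fin (d ^ 2) → Matrix (Fin d) (Fin d) ℂ := fun j =>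
    Matrix.of fun k1 l => if e k1 = (q j).1 + e l then ((ε (q j).1 (e l) : ℤ) : ℂ) else 0 with hA
  set B : Fin (d ^ 2) → Matrix (Fin d) (Fin d) ℂ := fun j =>
    Matrix.of fun k2 l => if e k2 = (q j).2 + e l then 1 else 0 with hB
  -- column sums
  have key : ∀ (c c' : G) (s s' : ℂ) (l m : Fin d),
      (∑ k, star (if e k = c + e l then s else (0:ℂ)) * (if e k = c' + e m then s' else 0))
        = if c + e l = c' + e m then star s * s' else 0 := by
    intro c c' s s' l m
    rw [Finset.sum_eq_single (e.symm (c + e l))]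
    · rw [Equiv.apply_symm_apply, if_pos rfl]
      by_cases h : c + e l = c' + e m
      · rw [if_pos h, if_pos h]
      · rw [if_neg h, if_neg h, mul_zero]
    · intro k _ hk
      rw [if_neg, star_zero, zero_mul]
      intro h
      exact hk (by rw [← Equiv.symm_apply_apply e k, h])
    · intro h; exact absurd (Finset.mem_univ _) h
  have keyA : ∀ j j' l m, (∑ k, star (A j k l) * A j' k m)
      = if (q j).1 + e l = (q j').1 + e m
          then ((ε (q j).1 (e l) * ε (q j').1 (e m) : ℤ) : ℂ) else 0 := by
    intro j j' l m
    rw [hA]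
    simp only [Matrix.of_apply]
    rw [key]
    rw [star_intCast, Int.cast_mul]
  have keyB : ∀ j j' l m, (∑ k, star (B j k l) * B j' k m)
      = if (q j).2 + e l = (q j').2 + e m then (1:ℂ) else 0 := by
    intro j j' l m
    rw [hB]
    simp only [Matrix.of_apply]
    rw [key, star_one, one_mul]
  refine ⟨A, B, fun j => ⟨?_, ?_⟩, ?_⟩
  · rw [Matrix.mem_unitaryGroup_iff']
    ext l m
    rw [Matrix.mul_apply, Matrix.one_apply]
    have : ∀ k, (star (A j)) l k * A j k m = star (A j k l) * A j k m := by
      intro k; rw [Matrix.star_apply]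
    rw [Finset.sum_congr rfl fun k _ => this k, keyA]
    by_cases h : l = m
    · subst h
      rw [if_pos rfl, if_pos rfl, hε2, Int.cast_one]
    · rw [if_neg h, if_neg ?_]
      intro hc
      exact h (e.injective (add_left_cancel hc))
  · rw [Matrix.mem_unitaryGroup_iff']
    ext l m
    rw [Matrix.mul_apply, Matrix.one_apply]
    have : ∀ k, (star (B j)) l k * B j k m = star (B j k l) * B j k m := by
      intro k; rw [Matrix.star_apply]
    rw [Finset.sum_congr rfl fun k _ => this k, keyB]
    by_cases h : l = m
    · subst h
      rw [if_pos rfl, if_pos rfl]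
    · rw [if_neg h, if_neg ?_]
      intro hc
      exact h (e.injective (add_left_cancel hc))
  · -- main orthonormality statement
    intro lam hlam
    set ψ : Fin d × Fin d → ℂ := fun p => if p.1 = p.2 then (lam p.1 : ℂ) else 0 with hψ
    set v : Fin (d ^ 2) → Fin d × Fin d → ℂ := fun j => (A j ⊗ₖ B j) *ᵥ ψ with hvdef
    have hv : ∀ j p, v j p = ∑ l, A j p.1 l * B j p.2 l * (lam l : ℂ) := by
      intro j p
      show ∑ r : Fin d × Fin d, (A j ⊗ₖ B j) p r * ψ r = _
      rw [Fintype.sum_prod_type]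
      refine Finset.sum_congr rfl fun r1 _ => ?_
      simp only [Matrix.kroneckerMap_apply, hψ, mul_ite, mul_zero]
      rw [Finset.sum_ite_eq, if_pos (Finset.mem_univ _)]
    have hsv : ∀ j p, star (v j p)
        = ∑ l, star (A j p.1 l) * star (B j p.2 l) * (lam l : ℂ) := by
      intro j p
      rw [hv, star_sum]
      refine Finset.sum_congr rfl fun l _ => ?_
      simp only [StarMul.star_mul]
      rw [show star ((lam l : ℂ)) = ((lam l : ℂ)) from by
        rw [Complex.star_def, Complex.conj_ofReal]]
      ring
    have htri : ∀ x y z : G, y + (x + y + z) = x + z := by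
      intro x y z
      rw [add_assoc x y z, add_left_comm y x (y + z), hcanc]
    have hgram : ∀ j j', star (v j) ⬝ᵥ v j' = if j = j' then 1 else 0 := by
      intro j j'
      have h0 : star (v j) ⬝ᵥ v j' = ∑ p : Fin d × Fin d, star (v j p) * v j' p := rfl
      have h1 : star (v j) ⬝ᵥ v j'
          = ∑ l, ∑ m, ((lam l : ℂ) * lam m) *
              ((if (q j).1 + e l = (q j').1 + e m
                  then ((ε (q j).1 (e l) * ε (q j').1 (e m) : ℤ) : ℂ) else 0) *
               (if (q j).2 + e l = (q j').2 + e m then (1:ℂ) else 0)) := by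
        rw [h0]
        rw [Finset.sum_congr rfl fun p (_ : p ∈ Finset.univ) => by rw [hsv, hv]]
        rw [rearr (fun k1 l => star (A j k1 l)) (fun k2 l => star (B j k2 l))
          (fun k1 m => A j' k1 m) (fun k2 m => B j' k2 m)
          (fun l => (lam l : ℂ)) (fun m => (lam m : ℂ))]
        exact Finset.sum_congr rfl fun l _ => Finset.sum_congr rfl fun m _ => by
          rw [keyA, keyB]
      rw [h1]
      by_cases hj : j = j'
      · subst hj
        rw [if_pos rfl]
        have hcol : ∀ l, (∑ m, ((lam l : ℂ) * lam m) *
            ((if (q j).1 + e l = (q j).1 + e m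
                then ((ε (q j).1 (e l) * ε (q j).1 (e m) : ℤ) : ℂ) else 0) *
             (if (q j).2 + e l = (q j).2 + e m then (1:ℂ) else 0)))
            = ((lam l : ℂ) * lam l) := by
          intro l
          rw [Finset.sum_eq_single l]
          · rw [if_pos rfl, if_pos rfl, hε2, Int.cast_one, one_mul, mul_one]
          · intro m _ hm
            rw [if_neg, zero_mul, mul_zero]
            intro hc
            exact hm (e.injective (add_left_cancel hc)).symm
          · intro h; exact absurd (Finset.mem_univ _) h
        rw [Finset.sum_congr rfl fun l (_ : l ∈ Finset.univ) => hcol l]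
        have : ∀ l : Fin d, ((lam l : ℂ) * lam l) = ((lam l ^ 2 : ℝ) : ℂ) := by
          intro l; push_cast; ring
        rw [Finset.sum_congr rfl fun l (_ : l ∈ Finset.univ) => this l,
          ← Complex.ofReal_sum, hlam, Complex.ofReal_one]
      · rw [if_neg hj]
        have hne : q j ≠ q j' := fun h => hj (q.injective h)
        by_cases hbr : (q j).2 + (q j').2 = (q j).1 + (q j').1
        · by_cases ha : (q j).1 = (q j').1
          · exfalso
            have hc0 : (q j).1 + (q j').1 = 0 := by rw [← ha, htwo]
            have hk : (q j).2 = (q j').2 := by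
              have h2 : (q j).2 + (q j').2 = 0 := hbr.trans hc0
              have h3 := hcanc (q j).2 (q j').2
              rw [h2, add_zero] at h3
              exact h3
            exact hne (Prod.ext ha hk)
          · -- involution case
            set t : Fin d → ℂ := fun l =>
              ((lam l : ℂ) * lam (e.symm ((q j).1 + (q j').1 + e l))) *
                ((ε (q j).1 (e l) * ε (q j').1 ((q j).1 + (q j').1 + e l) : ℤ) : ℂ) with ht
            have hcol : ∀ l, (∑ m, ((lam l : ℂ) * lam m) *
                ((if (q j).1 + e l = (q j').1 + e m
                    then ((ε (q j).1 (e l) * ε (q j').1 (e m) : ℤ) : ℂ) else 0) *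
                 (if (q j).2 + e l = (q j').2 + e m then (1:ℂ) else 0))) = t l := by
              intro l
              rw [Finset.sum_eq_single (e.symm ((q j).1 + (q j').1 + e l))]
              · rw [Equiv.apply_symm_apply, if_pos (htri _ _ _).symm,
                  if_pos (by rw [← hbr]; exact (htri _ _ _).symm), mul_one, ht]
              · intro m _ hm
                rw [if_neg, zero_mul, mul_zero]
                intro hc
                apply hm
                have h3 := hcanc (q j').1 (e m)
                rw [← hc] at h3
                have h5 : e m = (q j).1 + (q j').1 + e l := by
                  rw [← h3, ← add_assoc, add_comm ((q j').1) ((q j).1)]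
                rw [← h5, Equiv.symm_apply_apply]
              · intro h; exact absurd (Finset.mem_univ _) h
            rw [Finset.sum_congr rfl fun l (_ : l ∈ Finset.univ) => hcol l]
            set φ : Fin d ≃ Fin d :=
              ⟨fun l => e.symm ((q j).1 + (q j').1 + e l),
               fun l => e.symm ((q j).1 + (q j').1 + e l),
               fun l => by
                 show e.symm ((q j).1 + (q j').1 + e (e.symm ((q j).1 + (q j').1 + e l))) = l
                 rw [Equiv.apply_symm_apply, hcanc, Equiv.symm_apply_apply],
               fun l => by
                 show e.symm ((q j).1 + (q j').1 + e (e.symm ((q j).1 + (q j').1 + e l))) = l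
                 rw [Equiv.apply_symm_apply, hcanc, Equiv.symm_apply_apply]⟩
              with hφ
            have h7 : ∀ l, t (φ l) = - t l := by
              intro l
              have e1 : e (φ l) = (q j).1 + (q j').1 + e l := by
                show e (e.symm _) = _
                rw [Equiv.apply_symm_apply]
              have hsk : (ε (q j).1 ((q j).1 + (q j').1 + e l) * ε (q j').1 (e l))
                  = -(ε (q j).1 (e l) * ε (q j').1 ((q j).1 + (q j').1 + e l)) := by
                have := hskew ((q j).1) ((q j').1) (e l) ha
                linarith
              simp only [ht]
              rw [e1, hcanc, Equiv.symm_apply_apply, hsk, Int.cast_neg]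
              have e2 : φ l = e.symm ((q j).1 + (q j').1 + e l) := rfl
              rw [e2]
              ring
            have h8 : ∑ l, t l = - ∑ l, t l := by
              conv_lhs => rw [← Equiv.sum_comp φ t]
              rw [Finset.sum_congr rfl fun l (_ : l ∈ Finset.univ) => h7 l]
              rw [Finset.sum_neg_distrib]
            exact add_self_eq_zero.mp (eq_neg_iff_add_eq_zero.mp h8)
        · -- bracket false: all terms vanish
          refine Finset.sum_eq_zero fun l _ => Finset.sum_eq_zero fun m _ => ?_
          by_cases hc1 : (q j).1 + e l = (q j').1 + e m
          · rw [if_pos hc1, if_neg ?_, mul_zero, mul_zero]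
            intro hc2
            apply hbr
            have h3 := hcanc (q j').1 (e m)
            rw [← hc1] at h3
            have hem : e m = (q j).1 + (q j').1 + e l := by
              rw [← h3, ← add_assoc, add_comm ((q j').1) ((q j).1)]
            have h4 : (q j).2 = (q j').2 + ((q j).1 + (q j').1) := by
              have h5 : (q j).2 + e l = ((q j').2 + ((q j).1 + (q j').1)) + e l := by
                rw [hc2, hem, ← add_assoc]
              exact add_left_inj (e l) |>.mp h5
            calc (q j).2 + (q j').2 = (q j').2 + (q j).2 := add_comm _ _
              _ = (q j').2 + ((q j').2 + ((q j).1 + (q j').1)) := by rw [← h4]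
              _ = (q j).1 + (q j').1 := hcanc _ _
          · rw [if_neg hc1, zero_mul, mul_zero]
    constructor
    · exact hgram
    · have hli : LinearIndependent ℂ v := by
        rw [linearIndependent_iff']
        intro s g hsum i hi
        have hd : ∀ (w : Finset (Fin (d^2))) (g : Fin (d^2) → ℂ),
            star (v i) ⬝ᵥ (∑ j ∈ w, g j • v j) = ∑ j ∈ w, g j * (star (v i) ⬝ᵥ v j) := by
          intro w g
          simp only [dotProduct, Finset.sum_apply, Pi.smul_apply, smul_eq_mul,
            Finset.mul_sum]
          rw [Finset.sum_comm]
          exact Finset.sum_congr rfl fun j _ => Finset.sum_congr rfl fun p _ => by ring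
        have h := congrArg (fun w => star (v i) ⬝ᵥ w) hsum
        simp only [hd, dotProduct_zero, hgram, mul_ite, mul_one, mul_zero] at h
        rw [Finset.sum_ite_eq, if_pos hi] at h
        exact h
      have hcard : Fintype.card (Fin (d ^ 2)) = Module.finrank ℂ ((Fin d × Fin d) → ℂ) := by
        rw [Fintype.card_fin, Module.finrank_pi, Fintype.card_prod, Fintype.card_fin, sq]
      exact hli.span_eq_top_of_card_eq_finrank' hcard

/-- For local dimension `d ∈ {2,4,8}` there are `d²` pairs of `d×d` unitaries,
independent of the Schmidt coefficients, mapping every Schmidt-form state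
`∑ l, λ_l e_l ⊗ e_l` (with real `λ` and `∑ λ_l² = 1`) to an orthonormal basis. -/
theorem stmt1 (d : ℕ) (hd : d = 2 ∨ d = 4 ∨ d = 8) :
    ∃ A B : Fin (d ^ 2) → Matrix (Fin d) (Fin d) ℂ,
      (∀ j, A j ∈ Matrix.unitaryGroup (Fin d) ℂ ∧ B j ∈ Matrix.unitaryGroup (Fin d) ℂ) ∧
      ∀ lam : Fin d → ℝ, (∑ l, lam l ^ 2) = 1 →
        IsONBasis (fun j =>
          (A j ⊗ₖ B j) *ᵥ (fun p : Fin d × Fin d => if p.1 = p.2 then (lam p.1 : ℂ) else 0)) := by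
  rcases hd with rfl | rfl | rfl
  · exact master 2 (ZMod 2) (by decide) (Fintype.equivOfCardEq (by simp)) eps2
      (by decide) (by decide)
  · exact master 4 (ZMod 2 × ZMod 2) (by decide) (Fintype.equivOfCardEq (by simp)) eps4
      (by decide) (by decide)
  · exact master 8 (ZMod 2 × ZMod 2 × ZMod 2) (by decide) (Fintype.equivOfCardEq (by simp))
      eps8 (by decide) (by decide)
end

section
/- Let ψ be a unit vector in (ℂ²)^{⊗n}. If there exist 2^{n+1} strings V'_j = U₁^{(j)} ⊗ ⋯ ⊗ U_{n+1}^{(j)} of 2×2 complex unitary matrices such that the vectors V'_j(ψ ⊗ e₀) (j = 1, …, 2^{n+1}) are pairwise orthogonal unit vectors in (ℂ²)^{⊗(n+1)}, then there exist 2^n strings V_j = U₁^{(j)} ⊗ ⋯ ⊗ U_n^{(j)} of 2×2 complex unitary matrices such that the vectors V_j ψ (j = 1, …, 2^n) are pairwise orthogonal. Equivalently: if an n-qubit state ψ admits no basis under local unitaries, then the (n+1)-qubit state ψ ⊗ e₀ admits no basis. -/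
/-!
Write `V'_j = A_j ⊗ U_j`, where `U_j` acts on the last qubit, and put `w_j = U_j e₀`. Then
`V'_j (ψ ⊗ e₀) = A_j ψ ⊗ w_j`, so orthonormality reads
`⟨A_j ψ, A_j' ψ⟩ ⟨w_j, w_j'⟩ = δ_jj'`, and the strings `A_j` work for any `2^n` indices whose
unit vectors `w_j ∈ ℂ²` are pairwise non-orthogonal. In `ℂ²` a unit vector `w'` is orthogonal
to `w` iff `w' w'ᴴ = 1 - w wᴴ`, so orthogonality only relates the two lines of a pair
`{P, 1 - P}` of projectors. Keeping, for each such pair, the indices on its more populated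
side retains at least half of the `2^(n+1)` indices.
-/

open Matrix

/-- The `n`-fold Kronecker product `U 0 ⊗ ⋯ ⊗ U (n-1)` of `d×d` matrices, acting on
`(ℂ^d)^{⊗n} ≅ ℂ^{d^n}` indexed by `Fin n → Fin d`. -/
def kronPow {n d : ℕ} (U : Fin n → Matrix (Fin d) (Fin d) ℂ) :
    Matrix (Fin n → Fin d) (Fin n → Fin d) ℂ :=
  Matrix.of fun x y => ∏ k, U k (x k) (y k)

/-- The `(n+1)`-qubit state `ψ ⊗ e₀`. -/
def extendZero {n : ℕ} (ψ : (Fin n → Fin 2) → ℂ) : (Fin (n + 1) → Fin 2) → ℂ :=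
  fun x => if x (Fin.last n) = 0 then ψ (fun k => x k.castSucc) else 0

open Finset

theorem Fintype.exists_half_finset_bool_constant_on_fibers {ι Q : Type*} [Fintype ι]
    (p : ι → Q) (s : ι → Bool) :
    ∃ S : Finset ι, Fintype.card ι ≤ 2 * #S ∧ ∀ i ∈ S, ∀ j ∈ S, p i = p j → s i = s j := by
  classical
  obtain ⟨b, hb⟩ : ∃ b : Q → Bool,
      ∀ q, #{i | p i = q ∧ s i ≠ b q} ≤ #{i | p i = q ∧ s i = b q} := by
    refine ⟨fun q => decide (#{i | p i = q ∧ s i = false} ≤ #{i | p i = q ∧ s i = true}),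
      fun q => ?_⟩
    by_cases h : #{i | p i = q ∧ s i = false} ≤ #{i | p i = q ∧ s i = true}
    · simp [h]
    · simpa [h] using (not_le.mp h).le
  let S : Finset ι := {i | s i = b (p i)}
  have hmaps : ∀ T : Finset ι, (T : Set ι).MapsTo p (univ.image p) :=
    fun T i _ => mem_image_of_mem p (mem_univ i)
  have hcompl : #Sᶜ ≤ #S := by
    rw [card_eq_sum_card_fiberwise (hmaps Sᶜ), card_eq_sum_card_fiberwise (hmaps S)]
    refine sum_le_sum fun q _ => ?_
    have hS : {i ∈ S | p i = q} = ({i | p i = q ∧ s i = b q} : Finset ι) := by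
      ext i; simp only [S, mem_filter, mem_univ, true_and]; grind
    have hSc : {i ∈ Sᶜ | p i = q} = ({i | p i = q ∧ s i ≠ b q} : Finset ι) := by
      ext i; simp only [S, compl_filter, mem_filter, mem_univ, true_and]; grind
    rw [hS, hSc]
    exact hb q
  refine ⟨S, by have := card_add_card_compl S; omega, fun i hi j hj hij => ?_⟩
  simp only [S, mem_filter, mem_univ, true_and] at hi hj
  rw [hi, hj, hij]

theorem Fintype.exists_half_finset_forall_ne_of_involutive {ι X : Type*} [Fintype ι]
    (f : ι → X) {σ : X → X} (hσ : Function.Involutive σ) (hf : ∀ i, σ (f i) ≠ f i) :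
    ∃ S : Finset ι, Fintype.card ι ≤ 2 * #S ∧ ∀ i ∈ S, ∀ j ∈ S, f j ≠ σ (f i) := by
  -- A well-order on `X` singles out one point of every orbit `{x, σ x}`.
  let : LinearOrder X := IsWellOrder.linearOrder WellOrderingRel
  obtain ⟨S, hcard, hS⟩ := exists_half_finset_bool_constant_on_fibers
    (fun i => min (f i) (σ (f i))) (fun i => decide (f i < σ (f i)))
  refine ⟨S, hcard, fun i hi j hj hji => hf i ?_⟩
  have hlt := hS i hi j hj (by simp only [hji, hσ (f i), min_comm])
  simp only [hji, hσ (f i), decide_eq_decide] at hlt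
  rcases lt_trichotomy (f i) (σ (f i)) with h | h | h
  · exact (lt_asymm h (hlt.mp h)).elim
  · exact h.symm
  · exact (lt_asymm h (hlt.mpr h)).elim

section UnitVectors

variable {R : Type*} [CommRing R] [StarRing R]

theorem dotProduct_mulVec_of_mem_unitaryGroup {m : Type*} [Fintype m] [DecidableEq m]
    {U : Matrix m m R} (hU : U ∈ unitaryGroup m R) (v w : m → R) :
    star (U *ᵥ v) ⬝ᵥ (U *ᵥ w) = star v ⬝ᵥ w := by
  rw [star_mulVec, dotProduct_mulVec, vecMul_vecMul, ← star_eq_conjTranspose,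
    mem_unitaryGroup_iff'.mp hU, vecMul_one]

theorem vecMulVec_star_add_vecMulVec_star_eq_one {u v : Fin 2 → R}
    (hu : star u ⬝ᵥ u = 1) (hv : star v ⬝ᵥ v = 1) (huv : star u ⬝ᵥ v = 0) :
    vecMulVec u (star u) + vecMulVec v (star v) = 1 := by
  have hvu : star v ⬝ᵥ u = 0 := by rw [star_dotProduct, huv, star_zero]
  let W : Matrix (Fin 2) (Fin 2) R := (of ![u, v])ᵀ
  have hW : Wᴴ * W = 1 := by
    simp only [dotProduct, Fin.sum_univ_two, Pi.star_apply] at hu hv huv hvu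
    ext i j
    fin_cases i <;> fin_cases j <;> simpa [W, mul_apply, Fin.sum_univ_two]
  rw [← mul_eq_one_comm.mp hW]
  ext i j
  simp [W, mul_apply, Fin.sum_univ_two, vecMulVec_apply]

theorem dotProduct_eq_zero_of_vecMulVec_star_eq_one_sub {m : Type*} [Fintype m]
    [DecidableEq m] {u v : m → R} (hu : star u ⬝ᵥ u = 1) (hv : star v ⬝ᵥ v = 1)
    (h : vecMulVec v (star v) = 1 - vecMulVec u (star u)) : star u ⬝ᵥ v = 0 := by
  have hvu : star v ⬝ᵥ u = 0 := by
    simpa [vecMulVec_mulVec, sub_mulVec, hu, hv] using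
      congrArg (fun M => star v ⬝ᵥ (M *ᵥ u)) h
  rw [star_dotProduct, hvu, star_zero]

theorem dotProduct_eq_zero_iff_vecMulVec_star_eq_one_sub {u v : Fin 2 → R}
    (hu : star u ⬝ᵥ u = 1) (hv : star v ⬝ᵥ v = 1) :
    star u ⬝ᵥ v = 0 ↔ vecMulVec v (star v) = 1 - vecMulVec u (star u) :=
  ⟨fun huv => eq_sub_of_add_eq' (vecMulVec_star_add_vecMulVec_star_eq_one hu hv huv),
    dotProduct_eq_zero_of_vecMulVec_star_eq_one_sub hu hv⟩

theorem exists_half_finset_pairwise_dotProduct_ne_zero [Nontrivial R] {ι : Type*} [Fintype ι]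
    (w : ι → Fin 2 → R) (hw : ∀ i, star (w i) ⬝ᵥ w i = 1) :
    ∃ S : Finset ι, Fintype.card ι ≤ 2 * #S ∧ ∀ i ∈ S, ∀ j ∈ S, star (w i) ⬝ᵥ w j ≠ 0 := by
  have hinv : Function.Involutive fun P : Matrix (Fin 2) (Fin 2) R => 1 - P :=
    sub_sub_cancel 1
  obtain ⟨S, hcard, hS⟩ := Fintype.exists_half_finset_forall_ne_of_involutive
    (fun i => vecMulVec (w i) (star (w i))) hinv fun i h => one_ne_zero <|
      (hw i).symm.trans (dotProduct_eq_zero_of_vecMulVec_star_eq_one_sub (hw i) (hw i) h.symm)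
  exact ⟨S, hcard, fun i hi j hj h =>
    hS i hi j hj ((dotProduct_eq_zero_iff_vecMulVec_star_eq_one_sub (hw i) (hw j)).mp h)⟩

end UnitVectors

def snocTensor {R : Type*} [Mul R] {n d : ℕ} (f : (Fin n → Fin d) → R) (g : Fin d → R) :
    (Fin (n + 1) → Fin d) → R :=
  fun x => f (Fin.init x) * g (x (Fin.last n))

theorem Fin.sum_univ_pi_snoc {R : Type*} [AddCommMonoid R] {n d : ℕ}
    (F : (Fin (n + 1) → Fin d) → R) :
    ∑ x, F x = ∑ y : Fin n → Fin d, ∑ b, F (Fin.snoc y b) := by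
  rw [← (Fin.snocEquiv fun _ => Fin d).sum_comp, Fintype.sum_prod_type, Finset.sum_comm]
  rfl

theorem dotProduct_snocTensor {R : Type*} [CommSemiring R] [StarRing R] {n d : ℕ}
    (f f' : (Fin n → Fin d) → R) (g g' : Fin d → R) :
    star (snocTensor f g) ⬝ᵥ snocTensor f' g' = (star f ⬝ᵥ f') * (star g ⬝ᵥ g') := by
  simp only [dotProduct, Pi.star_apply, snocTensor, star_mul', Finset.sum_mul_sum,
    Fin.sum_univ_pi_snoc, Fin.init_snoc, Fin.snoc_last]
  exact Finset.sum_congr rfl fun _ _ => Finset.sum_congr rfl fun _ _ => by ring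

theorem kronPow_mulVec_snocTensor {n d : ℕ} (U : Fin (n + 1) → Matrix (Fin d) (Fin d) ℂ)
    (f : (Fin n → Fin d) → ℂ) (g : Fin d → ℂ) :
    kronPow U *ᵥ snocTensor f g =
      snocTensor (kronPow (Fin.init U) *ᵥ f) (U (Fin.last n) *ᵥ g) := by
  ext x
  simp only [mulVec, dotProduct, kronPow, snocTensor, Matrix.of_apply, Finset.sum_mul_sum,
    Fin.sum_univ_pi_snoc, Fin.init_snoc, Fin.snoc_last, Fin.prod_univ_castSucc]
  refine Finset.sum_congr rfl fun _ _ => Finset.sum_congr rfl fun _ _ => ?_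
  simp only [Fin.init, Fin.snoc_castSucc]
  ring

theorem extendZero_eq_snocTensor {n : ℕ} (ψ : (Fin n → Fin 2) → ℂ) :
    extendZero ψ = snocTensor ψ (Pi.single 0 1) := by
  ext x
  by_cases hx : x (Fin.last n) = 0 <;> simp [extendZero, snocTensor, hx, Fin.init_def]

theorem stmt2_general (n : ℕ) (ψ : (Fin n → Fin 2) → ℂ)
    (h : ∃ U : Fin (2 ^ (n + 1)) → Fin (n + 1) → Matrix (Fin 2) (Fin 2) ℂ,
      (∀ j k, U j k ∈ Matrix.unitaryGroup (Fin 2) ℂ) ∧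
      ∀ j j', star (kronPow (U j) *ᵥ extendZero ψ) ⬝ᵥ (kronPow (U j') *ᵥ extendZero ψ) =
        if j = j' then 1 else 0) :
    ∃ V : Fin (2 ^ n) → Fin n → Matrix (Fin 2) (Fin 2) ℂ,
      (∀ j k, V j k ∈ Matrix.unitaryGroup (Fin 2) ℂ) ∧
      ∀ j j', j ≠ j' → star (kronPow (V j) *ᵥ ψ) ⬝ᵥ (kronPow (V j') *ᵥ ψ) = 0 := by
  obtain ⟨U, hU, horth⟩ := h
  let w : Fin (2 ^ (n + 1)) → Fin 2 → ℂ := fun j => U j (Fin.last n) *ᵥ Pi.single 0 1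
  have hw : ∀ j, star (w j) ⬝ᵥ w j = 1 := fun j => by
    simp only [w]
    rw [dotProduct_mulVec_of_mem_unitaryGroup (hU j _)]
    simp
  have hfactor : ∀ j j', (star (kronPow (Fin.init (U j)) *ᵥ ψ) ⬝ᵥ
      (kronPow (Fin.init (U j')) *ᵥ ψ)) * (star (w j) ⬝ᵥ w j') = if j = j' then 1 else 0 :=
    fun j j' => by
      simpa only [extendZero_eq_snocTensor, kronPow_mulVec_snocTensor, dotProduct_snocTensor]
        using horth j j'
  obtain ⟨S, hcard, hS⟩ := exists_half_finset_pairwise_dotProduct_ne_zero w hw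
  obtain ⟨e⟩ : Nonempty (Fin (2 ^ n) ↪ S) :=
    Function.Embedding.nonempty_of_card_le <| by
      rw [Fintype.card_fin, Fintype.card_coe]
      simp only [Fintype.card_fin, pow_succ] at hcard
      omega
  refine ⟨fun i => Fin.init (U (e i)), fun i k => hU _ _, fun i i' hne => ?_⟩
  have hne' : (e i : Fin (2 ^ (n + 1))) ≠ e i' := fun h => hne (e.injective (Subtype.ext h))
  have hprod := hfactor (e i) (e i')
  rw [if_neg hne'] at hprod
  exact (mul_eq_zero.mp hprod).resolve_right (hS _ (e i).2 _ (e i').2)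

/-- If the `(n+1)`-qubit state `ψ ⊗ e₀` admits `2^{n+1}` local-unitary images that are
pairwise orthogonal unit vectors, then the `n`-qubit state `ψ` admits `2^n` local-unitary
images that are pairwise orthogonal. -/
theorem stmt2 (n : ℕ) (ψ : (Fin n → Fin 2) → ℂ) (hψ : star ψ ⬝ᵥ ψ = 1)
    (h : ∃ U : Fin (2 ^ (n + 1)) → Fin (n + 1) → Matrix (Fin 2) (Fin 2) ℂ,
      (∀ j k, U j k ∈ Matrix.unitaryGroup (Fin 2) ℂ) ∧
      ∀ j j', star (kronPow (U j) *ᵥ extendZero ψ) ⬝ᵥ (kronPow (U j') *ᵥ extendZero ψ) =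
        if j = j' then 1 else 0) :
    ∃ V : Fin (2 ^ n) → Fin n → Matrix (Fin 2) (Fin 2) ℂ,
      (∀ j k, V j k ∈ Matrix.unitaryGroup (Fin 2) ℂ) ∧
      ∀ j j', j ≠ j' → star (kronPow (V j) *ᵥ ψ) ⬝ᵥ (kronPow (V j') *ᵥ ψ) = 0 :=
  stmt2_general n ψ h
end

section
/- Let V₁, …, V_m be D×D complex unitary matrices. Then the following are equivalent: (i) for every real unit vector ψ ∈ ℂ^D, the vectors V₁ψ, …, V_mψ are pairwise orthogonal; (ii) for every pair j ≠ j', the matrix V_j† V_{j'} is skew-symmetric, i.e., (V_j† V_{j'})ᵀ = -(V_j† V_{j'}). In particular, when m = D, condition (ii) holds if and only if (V_j ψ)_{j=1}^D is an orthonormal basis of ℂ^D for every real unit vector ψ (a state-independent basis construction on the real state space). -/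
/-!
For a real vector `ψ` we have `star ψ = ψ`, so `⟪V_j ψ, V_j' ψ⟫ = ψᵀ (V_j† V_j') ψ` is the
quadratic form of `A = V_j† V_j'` at `ψ`. By homogeneity and polarization, `ψᵀ A ψ` vanishes on
all real unit vectors iff it vanishes at `e_i` and at `e_i + e_k`, i.e. iff `A i i = 0` and
`A i k + A k i = 0`, which says `Aᵀ = -A`. When `m = D`, the `D` vectors `V_j ψ` are
orthonormal (the diagonal case is unitarity), hence linearly independent, hence a basis of `ℂ^D`.
-/

open Matrix

section QuadraticForm

variable {n R : Type*} [Fintype n] [CommRing R]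

theorem dotProduct_mulVec_self_eq_zero_of_transpose_eq_neg [NoZeroDivisors R] [CharZero R]
    {A : Matrix n n R} (hA : Aᵀ = -A) (x : n → R) : x ⬝ᵥ (A *ᵥ x) = 0 := by
  refine self_eq_neg.mp ?_
  calc x ⬝ᵥ (A *ᵥ x) = (Aᵀ *ᵥ x) ⬝ᵥ x := by rw [dotProduct_mulVec, ← mulVec_transpose]
    _ = -(x ⬝ᵥ (A *ᵥ x)) := by rw [hA, neg_mulVec, neg_dotProduct, dotProduct_comm]

theorem transpose_eq_neg_of_dotProduct_mulVec_single [DecidableEq n] {A : Matrix n n R}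
    (hsingle : ∀ i, Pi.single i 1 ⬝ᵥ (A *ᵥ Pi.single i 1) = 0)
    (hpair : ∀ i k, i ≠ k →
      (Pi.single i 1 + Pi.single k 1) ⬝ᵥ (A *ᵥ (Pi.single i 1 + Pi.single k 1)) = 0) :
    Aᵀ = -A := by
  have hdiag : ∀ i, A i i = 0 := fun i => by
    simpa [single_dotProduct, mulVec_single] using hsingle i
  ext i k
  rcases eq_or_ne i k with rfl | hik
  · simp [hdiag]
  · have := hpair k i hik.symm
    simp only [mulVec_add, mulVec_single_one, add_dotProduct, dotProduct_add,
      single_one_dotProduct, col_apply, hdiag] at this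
    simp only [transpose_apply, Matrix.neg_apply]
    linear_combination this

end QuadraticForm

theorem star_eq_self_of_im_eq_zero {n : Type*} {ψ : n → ℂ} (h : ∀ i, (ψ i).im = 0) : star ψ = ψ :=
  funext fun i => Complex.conj_eq_iff_im.mpr (h i)

theorem transpose_eq_neg_iff_forall_real_unit {n : Type*} [Fintype n] (A : Matrix n n ℂ) :
    (∀ ψ : n → ℂ, (∀ i, (ψ i).im = 0) → star ψ ⬝ᵥ ψ = 1 → star ψ ⬝ᵥ (A *ᵥ ψ) = 0) ↔
      Aᵀ = -A := by
  classical
  refine ⟨fun h => ?_, fun hA ψ hreal _ => ?_⟩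
  · have hsingle_real : ∀ i l, ((Pi.single i 1 : n → ℂ) l).im = 0 := fun i l => by
      rw [Pi.single_apply]; split_ifs <;> simp
    refine transpose_eq_neg_of_dotProduct_mulVec_single (fun i => ?_) (fun i k hik => ?_)
    · have h1 := h _ (hsingle_real i) (by
        rw [star_eq_self_of_im_eq_zero (hsingle_real i)]; simp)
      rwa [star_eq_self_of_im_eq_zero (hsingle_real i)] at h1
    · set φ : n → ℂ := Pi.single i 1 + Pi.single k 1
      have hφ_real : ∀ l, (φ l).im = 0 := fun l => by simp [φ, hsingle_real]
      have hφφ : φ ⬝ᵥ φ = 2 := by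
        simp [φ, dotProduct_add, hik, hik.symm]
        norm_num
      -- `φ / √2` is a real unit vector
      set c : ℂ := ((√2 : ℝ) : ℂ)⁻¹
      have hc : c * c = 1 / 2 := by
        rw [← mul_inv, ← Complex.ofReal_mul, Real.mul_self_sqrt zero_le_two]; norm_num
      have hcφ_real : ∀ l, ((c • φ) l).im = 0 := fun l => by simp [c, hφ_real l]
      have h1 := h (c • φ) hcφ_real (by
        rw [star_eq_self_of_im_eq_zero hcφ_real, smul_dotProduct, dotProduct_smul, hφφ,
          smul_eq_mul, smul_eq_mul, ← mul_assoc, hc]; norm_num)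
      rw [star_eq_self_of_im_eq_zero hcφ_real, mulVec_smul, smul_dotProduct, dotProduct_smul,
        smul_eq_mul, smul_eq_mul, ← mul_assoc, hc] at h1
      simpa using h1
  · rw [star_eq_self_of_im_eq_zero hreal]
    exact dotProduct_mulVec_self_eq_zero_of_transpose_eq_neg hA ψ

theorem star_mulVec_dotProduct_mulVec {m n α : Type*} [Fintype m] [Fintype n]
    [NonUnitalSemiring α] [StarRing α] (M N : Matrix m n α) (v : n → α) :
    star (M *ᵥ v) ⬝ᵥ (N *ᵥ v) = star v ⬝ᵥ ((Mᴴ * N) *ᵥ v) := by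
  rw [star_mulVec, dotProduct_mulVec, dotProduct_mulVec, vecMul_vecMul]

theorem star_mulVec_dotProduct_mulVec_self_of_mem_unitaryGroup {n α : Type*} [Fintype n]
    [DecidableEq n] [CommRing α] [StarRing α] {U : Matrix n n α} (hU : U ∈ unitaryGroup n α)
    (v : n → α) : star (U *ᵥ v) ⬝ᵥ (U *ᵥ v) = star v ⬝ᵥ v := by
  rw [star_mulVec_dotProduct_mulVec, ← star_eq_conjTranspose, mem_unitaryGroup_iff'.mp hU,
    one_mulVec]

theorem linearIndependent_of_star_dotProduct_eq_ite {ι κ K : Type*} [Fintype ι] [DecidableEq ι]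
    [Fintype κ] [Field K] [StarRing K] {v : ι → κ → K}
    (hv : ∀ j j', star (v j) ⬝ᵥ v j' = if j = j' then 1 else 0) : LinearIndependent K v := by
  refine Fintype.linearIndependent_iff.mpr fun g hg j => ?_
  have := congrArg (star (v j) ⬝ᵥ ·) hg
  simpa [dotProduct_sum, dotProduct_smul, hv] using this

theorem IsONBasis.of_star_dotProduct_eq_ite {ι κ : Type*} [Fintype ι] [DecidableEq ι] [Fintype κ]
    {v : ι → κ → ℂ} (hcard : Fintype.card ι = Fintype.card κ)
    (hv : ∀ j j', star (v j) ⬝ᵥ v j' = if j = j' then 1 else 0) : IsONBasis v :=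
  ⟨hv, (linearIndependent_of_star_dotProduct_eq_ite hv).span_eq_top_of_card_eq_finrank' <| by
    rw [Module.finrank_fintype_fun_eq_card, hcard]⟩

/-- For `D×D` unitaries `V₁, …, V_m`: the images `V_j ψ` are pairwise orthogonal for every
real unit vector `ψ` iff `V_j† V_{j'}` is skew-symmetric for all `j ≠ j'`; and when `m = D`
this is further equivalent to `(V_j ψ)_j` being an orthonormal basis of `ℂ^D` for every real
unit vector `ψ` (a state-independent basis construction on the real state space). -/
theorem stmt6 (D m : ℕ) (V : Fin m → Matrix (Fin D) (Fin D) ℂ)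
    (hV : ∀ j, V j ∈ Matrix.unitaryGroup (Fin D) ℂ) :
    ((∀ ψ : Fin D → ℂ, (∀ i, (ψ i).im = 0) → star ψ ⬝ᵥ ψ = 1 →
        ∀ j j', j ≠ j' → star ((V j) *ᵥ ψ) ⬝ᵥ ((V j') *ᵥ ψ) = 0) ↔
      (∀ j j', j ≠ j' → ((V j)ᴴ * V j')ᵀ = -((V j)ᴴ * V j'))) ∧
    (m = D →
      ((∀ j j', j ≠ j' → ((V j)ᴴ * V j')ᵀ = -((V j)ᴴ * V j')) ↔
        (∀ ψ : Fin D → ℂ, (∀ i, (ψ i).im = 0) → star ψ ⬝ᵥ ψ = 1 →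
          IsONBasis (fun j => (V j) *ᵥ ψ)))) := by
  have orthogonal_iff_skew : (∀ ψ : Fin D → ℂ, (∀ i, (ψ i).im = 0) → star ψ ⬝ᵥ ψ = 1 →
        ∀ j j', j ≠ j' → star ((V j) *ᵥ ψ) ⬝ᵥ ((V j') *ᵥ ψ) = 0) ↔
      (∀ j j', j ≠ j' → ((V j)ᴴ * V j')ᵀ = -((V j)ᴴ * V j')) := by
    simp_rw [← transpose_eq_neg_iff_forall_real_unit, ← star_mulVec_dotProduct_mulVec]
    exact ⟨fun h j j' hjj' ψ hreal hunit => h ψ hreal hunit j j' hjj',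
      fun h ψ hreal hunit j j' hjj' => h j j' hjj' ψ hreal hunit⟩
  refine ⟨orthogonal_iff_skew, ?_⟩
  rintro rfl
  rw [← orthogonal_iff_skew]
  refine forall₃_congr fun ψ _ hunit => ⟨fun horth => ?_, fun hONB j j' hjj' => ?_⟩
  · refine IsONBasis.of_star_dotProduct_eq_ite rfl fun j j' => ?_
    rcases eq_or_ne j j' with rfl | hjj'
    · rw [star_mulVec_dotProduct_mulVec_self_of_mem_unitaryGroup (hV j), hunit, if_pos rfl]
    · rw [horth j j' hjj', if_neg hjj']
  · simpa [hjj'] using hONB.1 j j'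
end

section
/- Let A be a d₁×d₁ and B a d₂×d₂ nonzero complex matrix such that the Kronecker product A ⊗ B is skew-symmetric, i.e., (A ⊗ B)ᵀ = -(A ⊗ B). Then either A is symmetric (Aᵀ = A) and B is skew-symmetric (Bᵀ = -B), or A is skew-symmetric and B is symmetric. -/
open Matrix
open scoped Kronecker

/-!
Writing `(A ⊗ B)ᵀ = Aᵀ ⊗ Bᵀ`, the hypothesis says `Aᵀ ⊗ Bᵀ = -(A ⊗ B)`. A Kronecker product of
nonzero matrices determines its factors up to reciprocal scalars, so `Aᵀ = c • A` and
`Bᵀ = c' • B` with `c * c' = -1`. Transposing twice gives `c ^ 2 = 1`, hence `c = ±1` and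
`c' = -c`.
-/

namespace Matrix

variable {α K l m n p : Type*}

lemma exists_ne_zero_apply_of_ne_zero [Zero α] {M : Matrix m n α} (hM : M ≠ 0) :
    ∃ i j, M i j ≠ 0 := by
  obtain ⟨i, hi⟩ := Function.ne_iff.mp hM
  obtain ⟨j, hj⟩ := Function.ne_iff.mp hi
  exact ⟨i, j, hj⟩

lemma kronecker_ne_zero [MulZeroClass α] [NoZeroDivisors α] {A : Matrix l m α} {B : Matrix n p α}
    (hA : A ≠ 0) (hB : B ≠ 0) : A ⊗ₖ B ≠ 0 := by
  obtain ⟨i, j, hij⟩ := exists_ne_zero_apply_of_ne_zero hA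
  obtain ⟨k, q, hkq⟩ := exists_ne_zero_apply_of_ne_zero hB
  intro h
  exact mul_ne_zero hij hkq (congrFun (congrFun h (i, k)) (j, q))

variable [Field K]

lemma exists_eq_smul_left_of_kronecker_eq {A A' : Matrix l m K} {B B' : Matrix n p K}
    (h : A' ⊗ₖ B' = A ⊗ₖ B) (hB' : B' ≠ 0) : ∃ c : K, A' = c • A := by
  obtain ⟨k, q, hkq⟩ := exists_ne_zero_apply_of_ne_zero hB'
  refine ⟨B k q / B' k q, ext fun i j => ?_⟩
  have hentry : A' i j * B' k q = A i j * B k q := congrFun (congrFun h (i, k)) (j, q)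
  rw [smul_apply, smul_eq_mul]
  field_simp
  linear_combination hentry

lemma exists_eq_smul_right_of_kronecker_eq {A A' : Matrix l m K} {B B' : Matrix n p K}
    (h : A' ⊗ₖ B' = A ⊗ₖ B) (hA' : A' ≠ 0) : ∃ c : K, B' = c • B := by
  obtain ⟨i, j, hij⟩ := exists_ne_zero_apply_of_ne_zero hA'
  refine ⟨A i j / A' i j, ext fun k q => ?_⟩
  have hentry : A' i j * B' k q = A i j * B k q := congrFun (congrFun h (i, k)) (j, q)
  rw [smul_apply, smul_eq_mul]
  field_simp
  linear_combination hentry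

lemma eq_one_or_eq_neg_one_of_transpose_eq_smul {A : Matrix m m K} {c : K} (hA : A ≠ 0)
    (h : Aᵀ = c • A) : c = 1 ∨ c = -1 := by
  have hsq : (c * c) • A = (1 : K) • A := by
    rw [mul_smul, ← h, ← transpose_smul, ← h, transpose_transpose, one_smul]
  exact mul_self_eq_one_iff.mp (smul_left_injective K hA hsq)

theorem transpose_eq_and_transpose_eq_neg_of_transpose_kronecker_eq_neg
    {A : Matrix m m K} {B : Matrix n n K} (hA : A ≠ 0) (hB : B ≠ 0)
    (h : (A ⊗ₖ B)ᵀ = -(A ⊗ₖ B)) :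
    (Aᵀ = A ∧ Bᵀ = -B) ∨ (Aᵀ = -A ∧ Bᵀ = B) := by
  have hT : Aᵀ ⊗ₖ Bᵀ = (-1 : K) • (A ⊗ₖ B) := by rw [kroneckerMap_transpose, h, neg_one_smul]
  obtain ⟨c, hc⟩ := exists_eq_smul_left_of_kronecker_eq (hT.trans (kronecker_smul _ _ _).symm)
    (by simpa using hB)
  obtain ⟨c', hc'⟩ := exists_eq_smul_right_of_kronecker_eq (hT.trans (smul_kronecker _ _ _).symm)
    (by simpa using hA)
  have hcc' : c * c' = -1 := by
    refine smul_left_injective K (kronecker_ne_zero hA hB) ?_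
    dsimp only
    rw [← hT, hc, hc', smul_kronecker, kronecker_smul, smul_smul, mul_comm]
  rcases eq_one_or_eq_neg_one_of_transpose_eq_smul hA hc with rfl | rfl
  · left
    rw [one_mul] at hcc'
    simp [hc, hc', hcc']
  · right
    rw [neg_one_mul, neg_inj] at hcc'
    simp [hc, hc', hcc']

end Matrix

/-- If `A` and `B` are nonzero complex matrices whose Kronecker product `A ⊗ B` is
skew-symmetric, then either `A` is symmetric and `B` is skew-symmetric, or `A` is
skew-symmetric and `B` is symmetric. -/
theorem stmt7 (d₁ d₂ : ℕ) (A : Matrix (Fin d₁) (Fin d₁) ℂ) (B : Matrix (Fin d₂) (Fin d₂) ℂ)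
    (hA : A ≠ 0) (hB : B ≠ 0) (h : (A ⊗ₖ B)ᵀ = -(A ⊗ₖ B)) :
    (Aᵀ = A ∧ Bᵀ = -B) ∨ (Aᵀ = -A ∧ Bᵀ = B) :=
  transpose_eq_and_transpose_eq_neg_of_transpose_kronecker_eq_neg hA hB h
end

section
/- Let 𝒮 be a set of 2×2 complex unitary matrices containing the identity 1 and the matrix XZ = !![0, -1; 1, 0], such that for all U, V ∈ 𝒮 the product U†V is either symmetric or skew-symmetric. Then there exists a real rotation matrix W = !![cos α, -sin α; sin α, cos α] (for some α ∈ ℝ) such that every element of W† 𝒮 W is a unit-modulus complex scalar multiple of one of the four Pauli-type matrices 1, X, Z, XZ. -/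
open Matrix

/-- The Pauli gate `X = !![0, 1; 1, 0]`. -/
def PX : Matrix (Fin 2) (Fin 2) ℂ := !![0, 1; 1, 0]

/-- The Pauli gate `Z = !![1, 0; 0, -1]`. -/
def PZ : Matrix (Fin 2) (Fin 2) ℂ := !![1, 0; 0, -1]

/-- The Pauli-type gate `XZ = !![0, -1; 1, 0]`. -/
def PXZ : Matrix (Fin 2) (Fin 2) ℂ := !![0, -1; 1, 0]

/-- A real rotation matrix by angle `α`, viewed as a complex `2×2` matrix. -/
noncomputable def Wrot (α : ℝ) : Matrix (Fin 2) (Fin 2) ℂ :=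
  !![(Real.cos α : ℂ), -(Real.sin α : ℂ); (Real.sin α : ℂ), (Real.cos α : ℂ)]

/-!
Because `1 ∈ 𝒮`, every `U ∈ 𝒮` is symmetric or skew-symmetric, and because `XZ ∈ 𝒮` so is
`(XZ)† U`. For a `2×2` unitary this leaves three shapes: a phase times `1`, a phase times `XZ`, or a
phase times a real reflection `!![x, y; y, -x]` with `x² + y² = 1`. The first two commute with
every rotation, since `XZ = W(π/2)`. For two reflections `R, R'` the product `R† R'` is a real
rotation, which is symmetric or skew only if the axes of `R` and `R'` are equal or orthogonal.
So if `R = W(θ) Z` occurs in `𝒮`, every reflection in `𝒮` is `±W(θ) Z` or `±W(θ) X`, and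
conjugation by `W(θ/2)` turns these into `±Z` and `±X`.
-/

open ComplexConjugate Real

def IsSymmOrSkew {n R : Type*} [Neg R] (M : Matrix n n R) : Prop := Mᵀ = M ∨ Mᵀ = -M

lemma IsSymmOrSkew.of_smul {n K : Type*} [Field K] {c : K} {M : Matrix n n K} (hc : c ≠ 0)
    (h : IsSymmOrSkew (c • M)) : IsSymmOrSkew M := by
  rw [IsSymmOrSkew, transpose_smul, ← smul_neg] at h
  exact h.imp (fun h => smul_right_injective _ hc h) (fun h => smul_right_injective _ hc h)

lemma IsSymmOrSkew.of_smul_conjTranspose_mul_smul {n K : Type*} [Fintype n] [Field K] [StarRing K]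
    {w z : K} {A B : Matrix n n K} (hw : w ≠ 0) (hz : z ≠ 0)
    (h : IsSymmOrSkew ((w • A)ᴴ * (z • B))) : IsSymmOrSkew (Aᴴ * B) := by
  rw [conjTranspose_smul, smul_mul_smul_comm] at h
  exact h.of_smul (mul_ne_zero (star_ne_zero.mpr hw) hz)

lemma isSymmOrSkew_fin_two {R : Type*} [AddGroup R] [IsAddTorsionFree R] {a b c d : R} :
    IsSymmOrSkew !![a, b; c, d] ↔ b = c ∨ (a = 0 ∧ d = 0 ∧ b = -c) := by
  simp only [IsSymmOrSkew, ← ext_iff, transpose_apply, of_apply, cons_val', cons_val_fin_one,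
    Fin.forall_fin_two, Fin.isValue, cons_val_zero, cons_val_one, eq_comm (a := c), true_and,
    and_true, and_self, neg_of, neg_cons, neg_empty, self_eq_neg, neg_eq_iff_eq_neg]
  tauto

lemma conjTranspose_fin_two {R : Type*} [Star R] (a b c d : R) :
    !![a, b; c, d]ᴴ = !![star a, star c; star b, star d] := by
  ext i j; fin_cases i <;> fin_cases j <;> rfl

lemma norm_eq_one_of_smul_mem_unitaryGroup {n 𝕜 : Type*} [Fintype n] [DecidableEq n] [Nonempty n]
    [RCLike 𝕜] {M : Matrix n n 𝕜} {z : 𝕜} (hM : M ∈ unitaryGroup n 𝕜)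
    (hzM : z • M ∈ unitaryGroup n 𝕜) : ‖z‖ = 1 := by
  rw [mem_unitaryGroup_iff', star_smul, smul_mul_smul_comm, mem_unitaryGroup_iff'.mp hM,
    RCLike.star_def, RCLike.conj_mul] at hzM
  have h := congrFun (congrFun hzM (Classical.arbitrary n)) (Classical.arbitrary n)
  simp only [Matrix.smul_apply, one_apply_eq, smul_eq_mul, mul_one] at h
  exact (pow_eq_one_iff_of_nonneg (norm_nonneg z) two_ne_zero).mp (by exact_mod_cast h)

lemma exists_norm_eq_one_mul_ofReal {a b : ℂ} (hn : a * conj a + b * conj b = 1)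
    (h : a * conj b = b * conj a) :
    ∃ z : ℂ, ∃ x y : ℝ, ‖z‖ = 1 ∧ x ^ 2 + y ^ 2 = 1 ∧ a = z * x ∧ b = z * y := by
  have hn' : ‖a‖ ^ 2 + ‖b‖ ^ 2 = 1 := by
    rw [Complex.mul_conj', Complex.mul_conj'] at hn; exact_mod_cast hn
  rcases eq_or_ne a 0 with rfl | ha
  · exact ⟨b, 0, 1, (pow_eq_one_iff_of_nonneg (norm_nonneg b) two_ne_zero).mp (by simpa using hn'),
      by norm_num, by simp, by simp⟩
  set w := conj a * b
  have hw : (w.re : ℂ) = w := Complex.conj_eq_iff_re.mp (by simp [w, mul_comm, h])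
  have hw2 : w.re ^ 2 = ‖a‖ ^ 2 * ‖b‖ ^ 2 := by
    rw [← sq_abs, ← Real.norm_eq_abs, ← Complex.norm_real, hw, norm_mul, Complex.norm_conj,
      mul_pow]
  have hr : 0 < ‖a‖ := norm_pos_iff.mpr ha
  have hr' : (‖a‖ : ℂ) ≠ 0 := by exact_mod_cast hr.ne'
  refine ⟨a / ‖a‖, ‖a‖, w.re / ‖a‖, by rw [norm_div, Complex.norm_real, norm_norm, div_self hr.ne'],
    ?_, by field_simp, ?_⟩
  · field_simp
    nlinarith
  · push_cast
    rw [hw]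
    field_simp
    rw [← mul_assoc, Complex.mul_conj']
    ring

lemma exists_cos_sin_eq {x y : ℝ} (h : x ^ 2 + y ^ 2 = 1) : ∃ θ : ℝ, cos θ = x ∧ sin θ = y := by
  have hw : ‖(⟨x, y⟩ : ℂ)‖ = 1 := by simp [Complex.norm_def, Complex.normSq_apply, ← sq, h]
  refine ⟨Complex.arg ⟨x, y⟩, ?_, ?_⟩
  · simpa [hw] using Complex.norm_mul_cos_arg ⟨x, y⟩
  · simpa [hw] using Complex.norm_mul_sin_arg ⟨x, y⟩

lemma eq_or_eq_neg_of_mul_eq_mul {x y a b : ℝ} (h : x ^ 2 + y ^ 2 = 1) (hab : a ^ 2 + b ^ 2 = 1)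
    (hc : a * y = b * x) : (x = a ∧ y = b) ∨ (x = -a ∧ y = -b) := by
  have hd : (x * a + y * b) * (x * a + y * b) = 1 := by nlinarith [hc]
  rcases mul_self_eq_one_iff.mp hd with h1 | h1
  · exact Or.inl ⟨by nlinarith [sq_nonneg (x - a), sq_nonneg (y - b)],
      by nlinarith [sq_nonneg (x - a), sq_nonneg (y - b)]⟩
  · exact Or.inr ⟨by nlinarith [sq_nonneg (x + a), sq_nonneg (y + b)],
      by nlinarith [sq_nonneg (x + a), sq_nonneg (y + b)]⟩

lemma eq_or_eq_neg_of_mul_add_mul_eq_zero {x y a b : ℝ} (h : x ^ 2 + y ^ 2 = 1)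
    (hab : a ^ 2 + b ^ 2 = 1) (hd : a * x + b * y = 0) :
    (x = -b ∧ y = a) ∨ (x = b ∧ y = -a) := by
  have hc : (x * b - y * a) * (x * b - y * a) = 1 := by nlinarith [hd]
  rcases mul_self_eq_one_iff.mp hc with h1 | h1
  · exact Or.inr ⟨by nlinarith [sq_nonneg (x - b), sq_nonneg (y + a)],
      by nlinarith [sq_nonneg (x - b), sq_nonneg (y + a)]⟩
  · exact Or.inl ⟨by nlinarith [sq_nonneg (x + b), sq_nonneg (y - a)],
      by nlinarith [sq_nonneg (x + b), sq_nonneg (y - a)]⟩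

lemma conjTranspose_Wrot (α : ℝ) : (Wrot α)ᴴ = Wrot (-α) := by
  ext i j; fin_cases i <;> fin_cases j <;> simp [Wrot, -Complex.ofReal_cos, -Complex.ofReal_sin]

lemma Wrot_add (a b : ℝ) : Wrot (a + b) = Wrot a * Wrot b := by
  ext i j; fin_cases i <;> fin_cases j <;> simp [Wrot, cos_add, sin_add] <;> ring

lemma Wrot_zero : Wrot 0 = 1 := by
  simp [Wrot, one_fin_two]

lemma Wrot_mem_unitaryGroup (α : ℝ) : Wrot α ∈ unitaryGroup (Fin 2) ℂ := by
  rw [mem_unitaryGroup_iff', star_eq_conjTranspose, conjTranspose_Wrot, ← Wrot_add, neg_add_cancel,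
    Wrot_zero]

lemma PXZ_eq_Wrot : PXZ = Wrot (π / 2) := by
  simp [PXZ, Wrot]

lemma PXZ_mem_unitaryGroup : PXZ ∈ unitaryGroup (Fin 2) ℂ :=
  PXZ_eq_Wrot ▸ Wrot_mem_unitaryGroup _

lemma PZ_mul_Wrot (α : ℝ) : PZ * Wrot α = Wrot (-α) * PZ := by
  simp [PZ, Wrot]

lemma PX_mul_Wrot (α : ℝ) : PX * Wrot α = Wrot (-α) * PX := by
  simp [PX, Wrot]

lemma conj_Wrot_smul (α : ℝ) (z : ℂ) (M : Matrix (Fin 2) (Fin 2) ℂ) :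
    (Wrot α)ᴴ * (z • M) * Wrot α = z • ((Wrot α)ᴴ * M * Wrot α) := by
  rw [Matrix.mul_smul, Matrix.smul_mul]

lemma conj_Wrot_PXZ (α : ℝ) : (Wrot α)ᴴ * PXZ * Wrot α = PXZ := by
  rw [conjTranspose_Wrot, PXZ_eq_Wrot, ← Wrot_add, ← Wrot_add]
  ring_nf

lemma conj_Wrot_half_mul {M : Matrix (Fin 2) (Fin 2) ℂ}
    (hM : ∀ β, M * Wrot β = Wrot (-β) * M) (θ : ℝ) :
    (Wrot (θ / 2))ᴴ * (Wrot θ * M) * Wrot (θ / 2) = M := by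
  rw [conjTranspose_Wrot, Matrix.mul_assoc, Matrix.mul_assoc, hM, ← Matrix.mul_assoc (Wrot θ),
    ← Wrot_add, ← Matrix.mul_assoc, ← Wrot_add]
  ring_nf
  rw [Wrot_zero, Matrix.one_mul]

def reflMat (x y : ℝ) : Matrix (Fin 2) (Fin 2) ℂ := !![(x : ℂ), y; y, -x]

lemma reflMat_neg (x y : ℝ) : reflMat (-x) (-y) = (-1 : ℂ) • reflMat x y := by
  simp [reflMat]

lemma reflMat_cos_sin (θ : ℝ) : reflMat (cos θ) (sin θ) = Wrot θ * PZ := by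
  simp [reflMat, Wrot, PZ]

lemma reflMat_neg_sin_cos (θ : ℝ) : reflMat (-sin θ) (cos θ) = Wrot θ * PX := by
  simp [reflMat, Wrot, PX]

lemma conjTranspose_reflMat (x y : ℝ) : (reflMat x y)ᴴ = reflMat x y := by
  ext i j; fin_cases i <;> fin_cases j <;> simp [reflMat]

lemma conjTranspose_reflMat_mul_reflMat (a b x y : ℝ) :
    (reflMat a b)ᴴ * reflMat x y =
      !![((a * x + b * y : ℝ) : ℂ), (a * y - b * x : ℝ);
        (b * x - a * y : ℝ), (a * x + b * y : ℝ)] := by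
  rw [conjTranspose_reflMat]
  simp only [reflMat, mul_fin_two]
  push_cast
  ring_nf

lemma IsSymmOrSkew.reflMat {a b x y : ℝ} (h : IsSymmOrSkew ((reflMat a b)ᴴ * reflMat x y)) :
    a * y = b * x ∨ a * x + b * y = 0 := by
  rw [conjTranspose_reflMat_mul_reflMat, isSymmOrSkew_fin_two] at h
  rcases h with h | ⟨h, -⟩
  · left
    have : ((a * y : ℝ) : ℂ) = (b * x : ℝ) := by push_cast at h ⊢; linear_combination h / 2
    exact_mod_cast this
  · exact Or.inr (by exact_mod_cast h)

def IsPauliPhase (M : Matrix (Fin 2) (Fin 2) ℂ) : Prop :=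
  ∃ z : ℂ, ‖z‖ = 1 ∧ (M = z • 1 ∨ M = z • PX ∨ M = z • PZ ∨ M = z • PXZ)

lemma IsPauliPhase.smul {M : Matrix (Fin 2) (Fin 2) ℂ} (hM : IsPauliPhase M) {c : ℂ}
    (hc : ‖c‖ = 1) : IsPauliPhase (c • M) := by
  obtain ⟨z, hz, hM⟩ := hM
  refine ⟨c * z, by rw [norm_mul, hc, hz, one_mul], ?_⟩
  rcases hM with rfl | rfl | rfl | rfl <;> simp only [smul_smul] <;> tauto

lemma isPauliPhase_conj_Wrot_of_eq_smul {U : Matrix (Fin 2) (Fin 2) ℂ} {z : ℂ} (hz : ‖z‖ = 1)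
    (hU : U = z • 1 ∨ U = z • PXZ) (α : ℝ) : IsPauliPhase ((Wrot α)ᴴ * U * Wrot α) := by
  refine ⟨z, hz, ?_⟩
  rcases hU with rfl | rfl <;> rw [conj_Wrot_smul]
  · rw [Matrix.mul_one, ← star_eq_conjTranspose, mem_unitaryGroup_iff'.mp (Wrot_mem_unitaryGroup α)]
    exact Or.inl rfl
  · rw [conj_Wrot_PXZ]
    exact Or.inr (Or.inr (Or.inr rfl))

lemma isPauliPhase_conj_Wrot_reflMat {θ x y : ℝ} (hxy : x ^ 2 + y ^ 2 = 1)
    (h : cos θ * y = sin θ * x ∨ cos θ * x + sin θ * y = 0) :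
    IsPauliPhase ((Wrot (θ / 2))ᴴ * reflMat x y * Wrot (θ / 2)) := by
  have hneg : ∀ a b, IsPauliPhase ((Wrot (θ / 2))ᴴ * reflMat a b * Wrot (θ / 2)) →
      IsPauliPhase ((Wrot (θ / 2))ᴴ * reflMat (-a) (-b) * Wrot (θ / 2)) := fun a b hab => by
    rw [reflMat_neg, conj_Wrot_smul]; exact hab.smul (by simp)
  have hZ : IsPauliPhase ((Wrot (θ / 2))ᴴ * reflMat (cos θ) (sin θ) * Wrot (θ / 2)) := by
    rw [reflMat_cos_sin, conj_Wrot_half_mul PZ_mul_Wrot]; exact ⟨1, by simp, by simp⟩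
  have hX : IsPauliPhase ((Wrot (θ / 2))ᴴ * reflMat (-sin θ) (cos θ) * Wrot (θ / 2)) := by
    rw [reflMat_neg_sin_cos, conj_Wrot_half_mul PX_mul_Wrot]; exact ⟨1, by simp, by simp⟩
  rcases h with h | h
  · rcases eq_or_eq_neg_of_mul_eq_mul hxy (cos_sq_add_sin_sq θ) h with ⟨rfl, rfl⟩ | ⟨rfl, rfl⟩
    · exact hZ
    · exact hneg _ _ hZ
  · rcases eq_or_eq_neg_of_mul_add_mul_eq_zero hxy (cos_sq_add_sin_sq θ) h with
      ⟨rfl, rfl⟩ | ⟨rfl, rfl⟩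
    · exact hX
    · simpa using hneg _ _ hX

lemma eq_smul_one_or_PXZ_or_reflMat_of_isSymmOrSkew {U : Matrix (Fin 2) (Fin 2) ℂ}
    (hU : U ∈ unitaryGroup (Fin 2) ℂ) (hsym : IsSymmOrSkew U) (hXZ : IsSymmOrSkew (PXZᴴ * U)) :
    (∃ z : ℂ, ‖z‖ = 1 ∧ (U = z • 1 ∨ U = z • PXZ)) ∨
      ∃ z : ℂ, ∃ x y : ℝ, ‖z‖ = 1 ∧ x ^ 2 + y ^ 2 = 1 ∧ U = z • reflMat x y := by
  obtain ⟨a, b, c, d, rfl⟩ : ∃ a b c d, U = !![a, b; c, d] := ⟨_, _, _, _, eta_fin_two U⟩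
  have hPXZ : PXZᴴ * !![a, b; c, d] = !![c, d; -a, -b] := by
    simp [PXZ, conjTranspose_fin_two]
  rw [isSymmOrSkew_fin_two] at hsym
  rw [hPXZ, isSymmOrSkew_fin_two] at hXZ
  rcases hsym with rfl | ⟨rfl, rfl, rfl⟩
  · rcases hXZ with rfl | ⟨rfl, -, rfl⟩
    · have hU' := mem_unitaryGroup_iff.mp hU
      rw [star_eq_conjTranspose, conjTranspose_fin_two, mul_fin_two, one_fin_two] at hU'
      have h00 : a * conj a + b * conj b = 1 := congrFun₂ hU' 0 0
      have h01 : a * conj b + b * conj (-a) = 0 := congrFun₂ hU' 0 1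
      obtain ⟨z, x, y, hz, hxy, rfl, rfl⟩ :=
        exists_norm_eq_one_mul_ofReal h00 (by rw [map_neg] at h01; linear_combination h01)
      exact Or.inr ⟨z, x, y, hz, hxy, by simp [reflMat]⟩
    · have hscalar : !![a, 0; 0, - -a] = a • 1 := by simp [one_fin_two]
      exact Or.inl ⟨a, norm_eq_one_of_smul_mem_unitaryGroup (one_mem _) (hscalar ▸ hU),
        Or.inl hscalar⟩
  · have hrot : !![0, -c; c, 0] = c • PXZ := by simp [PXZ]
    exact Or.inl ⟨c, norm_eq_one_of_smul_mem_unitaryGroup PXZ_mem_unitaryGroup (hrot ▸ hU),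
      Or.inr hrot⟩

/-- If `𝒮` is a set of `2×2` unitaries containing `1` and `XZ` such that `U†V` is symmetric
or skew-symmetric for all `U, V ∈ 𝒮`, then after conjugation by a suitable real rotation
every element of `𝒮` is a unit-modulus scalar multiple of one of `1, X, Z, XZ`. -/
theorem stmt9 (S : Set (Matrix (Fin 2) (Fin 2) ℂ))
    (hS : ∀ U ∈ S, U ∈ Matrix.unitaryGroup (Fin 2) ℂ)
    (h1 : (1 : Matrix (Fin 2) (Fin 2) ℂ) ∈ S) (hXZ : PXZ ∈ S)
    (hprod : ∀ U ∈ S, ∀ V ∈ S, (Uᴴ * V)ᵀ = Uᴴ * V ∨ (Uᴴ * V)ᵀ = -(Uᴴ * V)) :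
    ∃ α : ℝ, ∀ U ∈ S, ∃ z : ℂ, ‖z‖ = 1 ∧
      ((Wrot α)ᴴ * U * Wrot α = z • (1 : Matrix (Fin 2) (Fin 2) ℂ) ∨
       (Wrot α)ᴴ * U * Wrot α = z • PX ∨
       (Wrot α)ᴴ * U * Wrot α = z • PZ ∨
       (Wrot α)ᴴ * U * Wrot α = z • PXZ) := by
  have hclass := fun U hU =>
    eq_smul_one_or_PXZ_or_reflMat_of_isSymmOrSkew (hS U hU)
      (by simpa [IsSymmOrSkew] using hprod 1 h1 U hU) (hprod PXZ hXZ U hU)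
  have hne {w : ℂ} (hw : ‖w‖ = 1) : w ≠ 0 := ne_zero_of_norm_ne_zero (hw ▸ one_ne_zero)
  by_cases hrefl : ∃ V ∈ S, ∃ z : ℂ, ∃ x y : ℝ, ‖z‖ = 1 ∧ x ^ 2 + y ^ 2 = 1 ∧ V = z • reflMat x y
  · obtain ⟨V, hV, z₀, x₀, y₀, hz₀, hxy₀, rfl⟩ := hrefl
    obtain ⟨θ, rfl, rfl⟩ := exists_cos_sin_eq hxy₀
    refine ⟨θ / 2, fun U hU => ?_⟩
    rcases hclass U hU with ⟨z, hz, hU'⟩ | ⟨z, x, y, hz, hxy, rfl⟩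
    · exact isPauliPhase_conj_Wrot_of_eq_smul hz hU' _
    · have hcoh :=
        IsSymmOrSkew.of_smul_conjTranspose_mul_smul (hne hz₀) (hne hz) (hprod _ hV _ hU)
      rw [conj_Wrot_smul]
      exact (isPauliPhase_conj_Wrot_reflMat hxy hcoh.reflMat).smul hz
  · refine ⟨0, fun U hU => ?_⟩
    rcases hclass U hU with ⟨z, hz, hU'⟩ | ⟨z, x, y, hz, hxy, rfl⟩
    · exact isPauliPhase_conj_Wrot_of_eq_smul hz hU' 0
    · exact absurd ⟨_, hU, z, x, y, hz, hxy, rfl⟩ hrefl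
end

section
/- The eight strings of local unitaries {1⊗1⊗1, Z⊗Z⊗XZ, Z⊗XZ⊗1, XZ⊗1⊗1, Z⊗X⊗XZ, X⊗1⊗XZ, X⊗XZ⊗Z, X⊗XZ⊗X} form a state-independent basis construction for real three-qubit states: for every real unit vector ψ ∈ (ℂ²)^{⊗3} (i.e., ψ = ∑_{i,j,k ∈ {0,1}} α_{ijk} e_i ⊗ e_j ⊗ e_k with all α_{ijk} ∈ ℝ and ∑ α_{ijk}² = 1), the eight image vectors form an orthonormal basis of ℂ⁸. -/
open Matrix
open scoped Kronecker

/-- The identity `2×2` gate (for readability of the strings below). -/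
def Pid : Matrix (Fin 2) (Fin 2) ℂ := 1

section helpers

lemma skew_dot {n : Type*} [Fintype n] (P : Matrix n n ℂ) (x : n → ℂ) (hP : Pᵀ = -P) :
    x ⬝ᵥ (P *ᵥ x) = 0 := by
  have h : x ⬝ᵥ (P *ᵥ x) = -(x ⬝ᵥ (P *ᵥ x)) := by
    conv_lhs => rw [dotProduct_mulVec, ← Matrix.mulVec_transpose, hP, Matrix.neg_mulVec,
      neg_dotProduct, dotProduct_comm]
  linear_combination h / 2

lemma dot_mulVec_mulVec {n : Type*} [Fintype n] (M N : Matrix n n ℂ) (x y : n → ℂ) :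
    (M *ᵥ x) ⬝ᵥ (N *ᵥ y) = x ⬝ᵥ ((Mᵀ * N) *ᵥ y) := by
  rw [← Matrix.mulVec_mulVec]
  conv_rhs => rw [dotProduct_mulVec, Matrix.vecMul_transpose]

lemma neg_kron {m n : Type*} (A : Matrix m m ℂ) (B : Matrix n n ℂ) :
    (-A) ⊗ₖ B = -(A ⊗ₖ B) := by
  ext ⟨i, j⟩ ⟨k, l⟩; simp

lemma kron_neg {m n : Type*} (A : Matrix m m ℂ) (B : Matrix n n ℂ) :
    A ⊗ₖ (-B) = -(A ⊗ₖ B) := by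
  ext ⟨i, j⟩ ⟨k, l⟩; simp

lemma tX : PXᵀ = PX := by ext i j; fin_cases i <;> fin_cases j <;> rfl
lemma tZ : PZᵀ = PZ := by ext i j; fin_cases i <;> fin_cases j <;> rfl
lemma tXZ : PXZᵀ = -PXZ := by ext i j; fin_cases i <;> fin_cases j <;> simp [PXZ, Matrix.transpose]
lemma tI : Pidᵀ = Pid := by rw [Pid, Matrix.transpose_one]

lemma mXX : PX * PX = 1 := by simp [PX, Matrix.mul_fin_two, Matrix.one_fin_two]
lemma mZZ : PZ * PZ = 1 := by simp [PZ, Matrix.mul_fin_two, Matrix.one_fin_two]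
lemma mWW : PXZ * PXZ = -1 := by simp [PXZ, Matrix.mul_fin_two, Matrix.one_fin_two]
lemma mXZ' : PX * PZ = PXZ := by simp [PX, PZ, PXZ, Matrix.mul_fin_two]
lemma mZX : PZ * PX = -PXZ := by simp [PX, PZ, PXZ, Matrix.mul_fin_two]
lemma mXW : PX * PXZ = PZ := by simp [PX, PZ, PXZ, Matrix.mul_fin_two]
lemma mWX : PXZ * PX = -PZ := by simp [PX, PZ, PXZ, Matrix.mul_fin_two]
lemma mZW : PZ * PXZ = -PX := by simp [PX, PZ, PXZ, Matrix.mul_fin_two]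
lemma mWZ : PXZ * PZ = PX := by simp [PX, PZ, PXZ, Matrix.mul_fin_two]

lemma oX : PXᵀ * PX = 1 := by rw [tX, mXX]
lemma oZ : PZᵀ * PZ = 1 := by rw [tZ, mZZ]
lemma oW : PXZᵀ * PXZ = 1 := by rw [tXZ, Matrix.neg_mul, mWW, neg_neg]
lemma oI : Pidᵀ * Pid = 1 := by rw [tI, Pid, one_mul]

lemma rX : ∀ a b, (starRingEnd ℂ) (PX a b) = PX a b := by
  intro a b; fin_cases a <;> fin_cases b <;> simp [PX]
lemma rZ : ∀ a b, (starRingEnd ℂ) (PZ a b) = PZ a b := by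
  intro a b; fin_cases a <;> fin_cases b <;> simp [PZ]
lemma rW : ∀ a b, (starRingEnd ℂ) (PXZ a b) = PXZ a b := by
  intro a b; fin_cases a <;> fin_cases b <;> simp [PXZ]
lemma rI : ∀ a b, (starRingEnd ℂ) (Pid a b) = Pid a b := by
  intro a b; simp [Pid, Matrix.one_apply, apply_ite]

lemma real_kron3 (A B C : Matrix (Fin 2) (Fin 2) ℂ)
    (hA : ∀ a b, (starRingEnd ℂ) (A a b) = A a b)
    (hB : ∀ a b, (starRingEnd ℂ) (B a b) = B a b)
    (hC : ∀ a b, (starRingEnd ℂ) (C a b) = C a b) :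
    ∀ (p q : Fin 2 × Fin 2 × Fin 2),
      (starRingEnd ℂ) ((A ⊗ₖ (B ⊗ₖ C)) p q) = (A ⊗ₖ (B ⊗ₖ C)) p q := by
  intro p q
  simp [_root_.map_mul, hA, hB, hC]

lemma real_mulVec {n : Type*} [Fintype n] (M : Matrix n n ℂ) (x : n → ℂ)
    (hM : ∀ p q, (starRingEnd ℂ) (M p q) = M p q)
    (hx : ∀ p, (starRingEnd ℂ) (x p) = x p) : star (M *ᵥ x) = M *ᵥ x := by
  funext p
  simp only [Pi.star_apply, mulVec, dotProduct, RCLike.star_def, map_sum, _root_.map_mul, hM, hx]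

lemma dot3_one (A B C : Matrix (Fin 2) (Fin 2) ℂ) (x : Fin 2 × Fin 2 × Fin 2 → ℂ)
    (hx : x ⬝ᵥ x = 1) (hA : Aᵀ * A = 1) (hB : Bᵀ * B = 1) (hC : Cᵀ * C = 1) :
    ((A ⊗ₖ (B ⊗ₖ C)) *ᵥ x) ⬝ᵥ ((A ⊗ₖ (B ⊗ₖ C)) *ᵥ x) = 1 := by
  rw [dot_mulVec_mulVec, ← Matrix.kroneckerMap_transpose, ← Matrix.kroneckerMap_transpose,
    ← Matrix.mul_kronecker_mul, ← Matrix.mul_kronecker_mul, hA, hB, hC,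
    Matrix.one_kronecker_one, Matrix.one_kronecker_one, Matrix.one_mulVec, hx]

lemma dot3_zero (A B C D E F : Matrix (Fin 2) (Fin 2) ℂ) (x : Fin 2 × Fin 2 × Fin 2 → ℂ)
    (h : ((Aᵀ * D) ⊗ₖ ((Bᵀ * E) ⊗ₖ (Cᵀ * F)))ᵀ = -((Aᵀ * D) ⊗ₖ ((Bᵀ * E) ⊗ₖ (Cᵀ * F)))) :
    ((A ⊗ₖ (B ⊗ₖ C)) *ᵥ x) ⬝ᵥ ((D ⊗ₖ (E ⊗ₖ F)) *ᵥ x) = 0 := by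
  rw [dot_mulVec_mulVec, ← Matrix.kroneckerMap_transpose, ← Matrix.kroneckerMap_transpose,
    ← Matrix.mul_kronecker_mul, ← Matrix.mul_kronecker_mul]
  exact skew_dot _ _ h

end helpers

/-- The eight strings `{1⊗1⊗1, Z⊗Z⊗XZ, Z⊗XZ⊗1, XZ⊗1⊗1, Z⊗X⊗XZ, X⊗1⊗XZ, X⊗XZ⊗Z, X⊗XZ⊗X}`
map every real unit three-qubit state to an orthonormal basis of `ℂ⁸`: a
state-independent basis construction for real three-qubit states. -/
theorem stmt11 (ψ : Fin 2 × Fin 2 × Fin 2 → ℂ) (hreal : ∀ p, (ψ p).im = 0)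
    (hψ : star ψ ⬝ᵥ ψ = 1) :
    IsONBasis (fun j : Fin 8 =>
      (![Pid ⊗ₖ (Pid ⊗ₖ Pid),
        PZ ⊗ₖ (PZ ⊗ₖ PXZ),
        PZ ⊗ₖ (PXZ ⊗ₖ Pid),
        PXZ ⊗ₖ (Pid ⊗ₖ Pid),
        PZ ⊗ₖ (PX ⊗ₖ PXZ),
        PX ⊗ₖ (Pid ⊗ₖ PXZ),
        PX ⊗ₖ (PXZ ⊗ₖ PZ),
        PX ⊗ₖ (PXZ ⊗ₖ PX)] j) *ᵥ ψ) := by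
  classical
  have hr : ∀ p, (starRingEnd ℂ) (ψ p) = ψ p := fun p => Complex.conj_eq_iff_im.mpr (hreal p)
  have hψ' : ψ ⬝ᵥ ψ = 1 := by
    rw [← hψ]; simp [dotProduct, hr]
  set M : Fin 8 → Matrix (Fin 2 × Fin 2 × Fin 2) (Fin 2 × Fin 2 × Fin 2) ℂ :=
    ![Pid ⊗ₖ (Pid ⊗ₖ Pid),
      PZ ⊗ₖ (PZ ⊗ₖ PXZ),
      PZ ⊗ₖ (PXZ ⊗ₖ Pid),
      PXZ ⊗ₖ (Pid ⊗ₖ Pid),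
      PZ ⊗ₖ (PX ⊗ₖ PXZ),
      PX ⊗ₖ (Pid ⊗ₖ PXZ),
      PX ⊗ₖ (PXZ ⊗ₖ PZ),
      PX ⊗ₖ (PXZ ⊗ₖ PX)] with hM
  set v : Fin 8 → (Fin 2 × Fin 2 × Fin 2 → ℂ) := fun j => M j *ᵥ ψ with hv
  have hstar : ∀ j, star (v j) = v j := by
    intro j
    refine real_mulVec _ _ ?_ hr
    fin_cases j <;>
      exact real_kron3 _ _ _
        (by first | exact rX | exact rZ | exact rW | exact rI)
        (by first | exact rX | exact rZ | exact rW | exact rI)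
        (by first | exact rX | exact rZ | exact rW | exact rI)
  have key : ∀ j j', star (v j) ⬝ᵥ v j' = if j = j' then 1 else 0 := by
    intro j j'
    rw [hstar j]
    show (M j *ᵥ ψ) ⬝ᵥ (M j' *ᵥ ψ) = _
    fin_cases j <;> fin_cases j' <;>
      first
        | (rw [if_pos rfl]
           exact dot3_one _ _ _ _ hψ'
             (by first | exact oX | exact oZ | exact oW | exact oI)
             (by first | exact oX | exact oZ | exact oW | exact oI)
             (by first | exact oX | exact oZ | exact oW | exact oI))
        | (rw [if_neg (by decide)]
           exact dot3_zero _ _ _ _ _ _ _ (by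
             simp [tX, tZ, tXZ, tI, Pid, Matrix.transpose_one, mXX, mZZ, mWW, mXZ', mZX,
               mXW, mWX, mZW, mWZ, neg_kron, kron_neg, Matrix.transpose_neg,
               Matrix.neg_mul, Matrix.mul_neg, neg_neg, Matrix.one_mul, Matrix.mul_one,
               ← Matrix.kroneckerMap_transpose, Matrix.one_kronecker_one]))
  refine ⟨key, ?_⟩
  have hli : LinearIndependent ℂ v := by
    refine Fintype.linearIndependent_iff.mpr fun g hg i => ?_
    have expand : star (v i) ⬝ᵥ (∑ j : Fin 8, g j • v j)
        = ∑ j : Fin 8, g j * (star (v i) ⬝ᵥ v j) := by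
      simp only [dotProduct, Finset.sum_apply, Pi.smul_apply, smul_eq_mul, Finset.mul_sum]
      rw [Finset.sum_comm]
      exact Finset.sum_congr rfl fun j _ => Finset.sum_congr rfl fun k _ => by ring
    rw [hg] at expand
    simp [key, mul_ite, Finset.sum_ite_eq] at expand
    exact expand.symm
  exact hli.span_eq_top_of_card_eq_finrank (by simp)
end

section
/- Let d be odd. Then for every n ≥ 1 and every choice of d×d complex unitary matrices U₁, …, Uₙ, there exists a real unit vector ψ ∈ (ℂ^d)^{⊗n} such that ⟨ψ, (U₁ ⊗ ⋯ ⊗ Uₙ)ψ⟩ ≠ 0. In particular, for odd local dimension d not even two universally orthogonal real states — and hence no state-independent basis construction on the real state space — can exist. -/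
open Matrix

/-- For odd local dimension `d`, every string of local unitaries `U₁ ⊗ ⋯ ⊗ Uₙ` fails to be
orthogonality-producing on real states: some real unit vector `ψ` satisfies
`⟨ψ, (U₁⊗⋯⊗Uₙ)ψ⟩ ≠ 0`. Hence no state-independent basis construction exists on the real
state space in odd local dimension. -/
theorem stmt15 (d n : ℕ) (hd : Odd d) (hn : 1 ≤ n)
    (U : Fin n → Matrix (Fin d) (Fin d) ℂ)
    (hU : ∀ k, U k ∈ Matrix.unitaryGroup (Fin d) ℂ) :
    ∃ ψ : (Fin n → Fin d) → ℂ, (∀ x, (ψ x).im = 0) ∧ star ψ ⬝ᵥ ψ = 1 ∧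
      star ψ ⬝ᵥ (kronPow U *ᵥ ψ) ≠ 0 := by
  by_contra h
  push_neg at h
  set M := kronPow U with hM
  -- unitarity of M
  have hMM : M * Mᴴ = 1 := by
    ext x y
    simp only [Matrix.mul_apply, Matrix.conjTranspose_apply, hM, kronPow, Matrix.of_apply,
      Matrix.one_apply]
    have e1 : ∀ z : Fin n → Fin d, (∏ k, U k (x k) (z k)) * star (∏ k, U k (y k) (z k))
        = ∏ k, (U k (x k) (z k) * star (U k (y k) (z k))) := by
      intro z; rw [star_prod, ← Finset.prod_mul_distrib]
    simp_rw [e1]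
    rw [← Fintype.piFinset_univ,
      ← Finset.prod_univ_sum (fun _ => Finset.univ)
        (fun k j => U k (x k) j * star (U k (y k) j))]
    have hU1 : ∀ k, U k * (U k)ᴴ = 1 := fun k => Matrix.mem_unitaryGroup_iff.mp (hU k)
    have e2 : ∀ k, (∑ j, U k (x k) j * star (U k (y k) j)) = (1 : Matrix (Fin d) (Fin d) ℂ) (x k) (y k) := by
      intro k
      rw [← hU1 k, Matrix.mul_apply]
      simp [Matrix.conjTranspose_apply]
    simp_rw [e2]
    by_cases hxy : x = y
    · subst hxy; simp [Matrix.one_apply]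
    · rw [if_neg hxy]
      obtain ⟨k, hk⟩ := Function.ne_iff.mp hxy
      exact Finset.prod_eq_zero (Finset.mem_univ k) (by simp [Matrix.one_apply, hk])
  have hdet : M.det ≠ 0 := by
    have : M.det * Mᴴ.det = 1 := by rw [← Matrix.det_mul, hMM, Matrix.det_one]
    exact left_ne_zero_of_mul_eq_one this
  -- every real vector gives 0
  have key : ∀ φ : (Fin n → Fin d) → ℂ, (∀ z, (φ z).im = 0) → φ ≠ 0 →
      star φ ⬝ᵥ (M *ᵥ φ) = 0 := by
    intro φ hre hne
    have hφ : ∀ z, φ z = ((φ z).re : ℂ) := by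
      intro z; exact Complex.ext rfl (by simp [hre z])
    have hc : star φ ⬝ᵥ φ = ((∑ z, (φ z).re ^ 2 : ℝ) : ℂ) := by
      simp only [dotProduct, Pi.star_apply]
      push_cast
      refine Finset.sum_congr rfl fun z _ => ?_
      rw [hφ z]
      simp [sq]
    have hpos : 0 < ∑ z, (φ z).re ^ 2 := by
      obtain ⟨z, hz⟩ := Function.ne_iff.mp hne
      have hz' : (φ z).re ≠ 0 := by
        intro h0
        apply hz
        rw [hφ z, h0]; simp
      exact Finset.sum_pos' (fun i _ => sq_nonneg _)
        ⟨z, Finset.mem_univ z, by positivity⟩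
    set s := Real.sqrt (∑ z, (φ z).re ^ 2) with hs
    have hs0 : s ≠ 0 := ne_of_gt (Real.sqrt_pos.mpr hpos)
    set c : ℂ := ((s⁻¹ : ℝ) : ℂ) with hcdef
    have hc0 : c ≠ 0 := by
      simp [hcdef, hs0]
    set ψ : (Fin n → Fin d) → ℂ := c • φ with hψ
    have him : ∀ z, (ψ z).im = 0 := by
      intro z; simp [hψ, hcdef, Complex.mul_im, hre z]
    have hstar : star ψ = c • star φ := by
      rw [hψ, star_smul]
      congr 1
      simp [hcdef]
    have hsq : c * c * ((∑ z, (φ z).re ^ 2 : ℝ) : ℂ) = 1 := by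
      rw [hcdef, ← Complex.ofReal_mul, ← Complex.ofReal_mul, ← mul_inv,
        hs, Real.mul_self_sqrt hpos.le]
      norm_cast
      exact inv_mul_cancel₀ (ne_of_gt hpos)
    have hnorm : star ψ ⬝ᵥ ψ = 1 := by
      rw [hstar, hψ, smul_dotProduct, dotProduct_smul, smul_eq_mul, smul_eq_mul,
        ← mul_assoc, hc, hsq]
    have h0 := h ψ him hnorm
    rw [hstar, hψ, Matrix.mulVec_smul, smul_dotProduct, dotProduct_smul,
      smul_eq_mul, smul_eq_mul, ← mul_assoc] at h0
    rcases mul_eq_zero.mp h0 with h1 | h1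
    · exact absurd h1 (by simp [hc0, mul_ne_zero hc0 hc0])
    · exact h1
  -- diagonal entries vanish
  have dotlem : ∀ a b, star (Pi.single a (1:ℂ)) ⬝ᵥ (M *ᵥ Pi.single b 1) = M a b := by
    intro a b
    have h1 : M *ᵥ Pi.single b 1 = fun i => M i b := by
      funext i
      simp [Matrix.mulVec, dotProduct, Pi.single_apply]
    rw [h1]
    simp [dotProduct, Pi.single_apply, apply_ite star]
  have keydiag : ∀ x, M x x = 0 := by
    intro x
    rw [← dotlem x x]
    refine key _ (fun z => ?_) ?_
    · simp [Pi.single_apply]; split <;> simp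
    · intro h0
      have := congrFun h0 x
      simp at this
  have keyoff : ∀ x y, x ≠ y → M x y + M y x = 0 := by
    intro x y hxy
    have hval := key (Pi.single x (1:ℂ) + Pi.single y 1) (fun z => by
        simp [Pi.single_apply]; split <;> split <;> simp) (by
        intro h0
        have := congrFun h0 x
        simp [Pi.single_apply, hxy] at this)
    rw [star_add, add_dotProduct, Matrix.mulVec_add, dotProduct_add, dotProduct_add,
      dotlem, dotlem, dotlem, dotlem, keydiag x, keydiag y] at hval
    linear_combination hval
  -- antisymmetry
  have hA : Mᵀ = -M := by
    ext x y
    by_cases hxy : x = y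
    · subst hxy; simp [Matrix.transpose_apply, keydiag x]
    · have := keyoff y x (Ne.symm hxy)
      simp only [Matrix.transpose_apply, Matrix.neg_apply]
      linear_combination this
  -- odd dimension
  have hcard : Odd (Fintype.card (Fin n → Fin d)) := by
    rw [Fintype.card_fun, Fintype.card_fin, Fintype.card_fin]
    exact hd.pow
  have hdo : M.det = -M.det := by
    conv_lhs => rw [← Matrix.det_transpose M, hA]
    rw [Matrix.det_neg, hcard.neg_one_pow, neg_one_mul]
  have : M.det = 0 := by
    have h2 : (2 : ℂ) * M.det = 0 := by linear_combination hdo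
    simpa using h2
  exact hdet this
end

section
/- For every n ≥ 1 and d ≥ 1, the d^n vectors (Z_d^{j₁} ⊗ X_d^{j₂} ⊗ ⋯ ⊗ X_d^{jₙ}) · GHZ_{n,d}, indexed by (j₁, …, jₙ) ∈ {0, …, d-1}^n, form an orthonormal basis of (ℂ^d)^{⊗n} ≅ ℂ^{d^n}, where GHZ_{n,d} = (1/√d) ∑_{k=0}^{d-1} e_k^{⊗n} is the generalized GHZ state. -/
/-! The operator `Z^{j₀} ⊗ X^{j₁} ⊗ ⋯ ⊗ X^{jₙ₋₁}` is a monomial matrix: it sends `e_c^{⊗n}` to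
`ω^{c j₀} e_{(c, c + j₁, …, c + jₙ₋₁)}` with `ω = e^{2πi/d}`, so the `j`-th vector is
`d^{-1/2} ∑_c ω^{c j₀} e_{(c, c + j₁, …, c + jₙ₋₁)}`. Vectors with different tails
`(j₁, …, jₙ₋₁)` have disjoint supports; for equal tails the inner product is
`d⁻¹ ∑_c ω^{c (j₀' - j₀)} = δ_{j₀ j₀'}`, the orthogonality of the characters of `ℤ/d`.
Finally, `d^n` orthonormal vectors in `ℂ^{d^n}` span it. -/

open Matrix

/-- The generalised Pauli clock matrix `Z_d = ∑_l e^{2πil/d} |l⟩⟨l|`. -/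
noncomputable def clockZ (d : ℕ) : Matrix (Fin d) (Fin d) ℂ :=
  Matrix.of fun l m =>
    if l = m then Complex.exp (2 * (Real.pi : ℂ) * Complex.I * ((l : ℕ) : ℂ) / (d : ℂ)) else 0

/-- The generalised Pauli shift matrix `X_d = ∑_l |l+1 mod d⟩⟨l|`. -/
def shiftX (d : ℕ) : Matrix (Fin d) (Fin d) ℂ :=
  Matrix.of fun l m => if (l : ℕ) = ((m : ℕ) + 1) % d then 1 else 0

/-- The generalised GHZ state `GHZ_{n,d} = (1/√d) ∑_k e_k^{⊗n}`: its coordinate at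
`x : Fin n → Fin d` is `1/√d` if `x` is constant and `0` otherwise. -/
noncomputable def GHZ (n d : ℕ) : (Fin n → Fin d) → ℂ :=
  fun x => if ∀ k k', x k = x k' then ((Real.sqrt d : ℂ))⁻¹ else 0

open Finset

section LinearAlgebra

variable {ι κ : Type*} [Fintype ι] [DecidableEq ι] [Fintype κ]

theorem linearIndependent_of_dotProduct_eq_ite {R : Type*} [CommRing R] {v w : ι → κ → R}
    (h : ∀ i j, w i ⬝ᵥ v j = if i = j then 1 else 0) : LinearIndependent R v := by
  rw [Fintype.linearIndependent_iff]
  intro g hg i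
  simpa [dotProduct_sum, dotProduct_smul, h] using congrArg (w i ⬝ᵥ ·) hg

theorem isONBasis_of_card_eq {v : ι → κ → ℂ}
    (h : ∀ j j', star (v j) ⬝ᵥ v j' = if j = j' then 1 else 0)
    (hcard : Fintype.card ι = Fintype.card κ) : IsONBasis v :=
  ⟨h, (linearIndependent_of_dotProduct_eq_ite h).span_eq_top_of_card_eq_finrank'
    (by rwa [Module.finrank_fintype_fun_eq_card])⟩

theorem star_sum_ite_dotProduct_sum_ite {γ R : Type*} [Fintype γ] [DecidableEq κ]
    [CommSemiring R] [StarRing R] (σ τ : γ → κ) (a b : γ → R) :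
    star (fun x => ∑ c, if x = σ c then a c else 0) ⬝ᵥ (fun x => ∑ c, if x = τ c then b c else 0)
      = ∑ c, ∑ c', if σ c = τ c' then star (a c) * b c' else 0 := by
  simp only [dotProduct, Pi.star_apply, star_sum, sum_mul_sum]
  rw [sum_comm]
  refine sum_congr rfl fun c _ => ?_
  rw [sum_comm]
  refine sum_congr rfl fun c' _ => ?_
  simp [apply_ite star, ite_mul, mul_ite, eq_comm]

end LinearAlgebra

theorem geom_sum_eq_ite_of_pow_eq_one {K : Type*} [Field K] [DecidableEq K] {w : K} {d : ℕ}
    (hw : w ^ d = 1) : ∑ i ∈ range d, w ^ i = if w = 1 then (d : K) else 0 := by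
  split_ifs with h
  · simp [h]
  · rw [geom_sum_eq h, hw, sub_self, zero_div]

theorem IsPrimitiveRoot.star_pow_mul_pow_eq_one_iff {ζ : ℂ} {d a b : ℕ}
    (hζ : IsPrimitiveRoot ζ d) (ha : a < d) (hb : b < d) :
    star (ζ ^ a) * ζ ^ b = 1 ↔ a = b := by
  have hnorm : ‖ζ ^ a‖ = 1 :=
    Complex.norm_eq_one_of_pow_eq_one (by rw [← pow_mul, mul_comm, pow_mul, hζ.pow_eq_one, one_pow])
      (by omega)
  rw [Complex.star_def, ← Complex.inv_eq_conj hnorm,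
    inv_mul_eq_one₀ (pow_ne_zero _ (hζ.ne_zero (by omega)))]
  exact ⟨fun h => hζ.pow_inj ha hb h, fun h => h ▸ rfl⟩

theorem kronPow_apply_of_monomial {n d : ℕ} {U : Fin n → Matrix (Fin d) (Fin d) ℂ}
    (π : Fin n → Fin d → Fin d) (μ : Fin n → Fin d → ℂ)
    (hU : ∀ k l m, U k l m = if l = π k m then μ k m else 0) (x y : Fin n → Fin d) :
    kronPow U x y = if x = (fun k => π k (y k)) then ∏ k, μ k (y k) else 0 := by
  simp [kronPow, hU, Fintype.prod_ite_zero, funext_iff]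

theorem GHZ_eq_sum_single (n d : ℕ) [NeZero n] :
    GHZ n d = (Real.sqrt d : ℂ)⁻¹ • ∑ c : Fin d, Pi.single (fun _ => c) 1 := by
  ext y
  have hconst : ∀ c : Fin d, y = (fun _ => c) ↔ (∀ k k', y k = y k') ∧ c = y 0 := by
    intro c
    constructor
    · rintro rfl; simp
    · rintro ⟨h, rfl⟩; exact funext fun k => h k 0
  simp [GHZ, Finset.sum_apply, Pi.single_apply, hconst, ite_and]

theorem kronPow_mulVec_GHZ {n d : ℕ} [NeZero n] (U : Fin n → Matrix (Fin d) (Fin d) ℂ)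
    (x : Fin n → Fin d) :
    (kronPow U *ᵥ GHZ n d) x = ∑ c : Fin d, (Real.sqrt d : ℂ)⁻¹ * kronPow U x (fun _ => c) := by
  simp [GHZ_eq_sum_single, mulVec_sum, mulVec_smul, Finset.sum_apply, mul_sum]

noncomputable def clockPhase (d : ℕ) : ℂ :=
  Complex.exp (2 * Real.pi * Complex.I / d)

theorem clockPhase_isPrimitiveRoot (d : ℕ) [NeZero d] : IsPrimitiveRoot (clockPhase d) d :=
  Complex.isPrimitiveRoot_exp d (NeZero.ne d)

theorem clockZ_eq_diagonal (d : ℕ) :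
    clockZ d = diagonal fun l : Fin d => clockPhase d ^ (l : ℕ) := by
  ext l m
  simp only [clockZ, clockPhase, of_apply, diagonal_apply, ← Complex.exp_nat_mul]
  congr 2
  ring

theorem clockZ_pow_apply (d a : ℕ) (l m : Fin d) :
    (clockZ d ^ a) l m = if l = m then (clockPhase d ^ a) ^ (m : ℕ) else 0 := by
  rw [clockZ_eq_diagonal, diagonal_pow, diagonal_apply, Pi.pow_apply, pow_right_comm]
  split_ifs with h
  · rw [h]
  · rfl

theorem shiftX_apply (d : ℕ) [NeZero d] (l m : Fin d) :
    shiftX d l m = if l = m + 1 then 1 else 0 := by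
  simp [shiftX, Fin.ext_iff, Fin.val_add]

open Fin.NatCast in
theorem shiftX_pow_apply (d : ℕ) [NeZero d] (a : ℕ) (l m : Fin d) :
    (shiftX d ^ a) l m = if l = m + a then 1 else 0 := by
  induction a generalizing m with
  | zero => simp [one_apply]
  | succ a ih =>
    rw [pow_succ, mul_apply, sum_eq_single (m + 1)]
    · simp [ih, shiftX_apply, add_assoc, add_comm (1 : Fin d)]
    · intro b _ hb
      rw [shiftX_apply, if_neg hb, mul_zero]
    · simp

theorem IsPrimitiveRoot.sum_star_pow_mul_pow {ζ : ℂ} {d : ℕ} (hζ : IsPrimitiveRoot ζ d)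
    (a b : Fin d) :
    ∑ c : Fin d, star ((ζ ^ (a : ℕ)) ^ (c : ℕ)) * (ζ ^ (b : ℕ)) ^ (c : ℕ)
      = if a = b then (d : ℂ) else 0 := by
  have hroot : (star (ζ ^ (a : ℕ)) * ζ ^ (b : ℕ)) ^ d = 1 := by
    rw [mul_pow, ← star_pow, ← pow_mul, ← pow_mul, mul_comm (a : ℕ), mul_comm (b : ℕ), pow_mul,
      pow_mul, hζ.pow_eq_one, one_pow, one_pow, star_one, one_mul]
  have hterm : ∀ c : ℕ, star ((ζ ^ (a : ℕ)) ^ c) * (ζ ^ (b : ℕ)) ^ c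
      = (star (ζ ^ (a : ℕ)) * ζ ^ (b : ℕ)) ^ c := fun c => by rw [mul_pow, star_pow]
  simp only [hterm]
  rw [Fin.sum_univ_eq_sum_range (fun c => (star (ζ ^ (a : ℕ)) * ζ ^ (b : ℕ)) ^ c),
    geom_sum_eq_ite_of_pow_eq_one hroot]
  simp only [hζ.star_pow_mul_pow_eq_one_iff a.isLt b.isLt, Fin.val_inj]

noncomputable def ghzBasisVec (n d : ℕ) (j : Fin n → Fin d) : (Fin n → Fin d) → ℂ :=
  kronPow (fun k => if (k : ℕ) = 0 then clockZ d ^ ((j k : ℕ)) else shiftX d ^ ((j k : ℕ)))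
    *ᵥ GHZ n d

section GHZBasis

variable {n d : ℕ}

def ghzBranch [NeZero n] (j : Fin n → Fin d) (c : Fin d) : Fin n → Fin d :=
  fun k => if k = 0 then c else c + j k

theorem ghzBasisVec_eq [NeZero n] [NeZero d] (j : Fin n → Fin d) :
    ghzBasisVec n d j = fun x => ∑ c : Fin d,
      if x = ghzBranch j c then (Real.sqrt d : ℂ)⁻¹ * (clockPhase d ^ (j 0 : ℕ)) ^ (c : ℕ)
      else 0 := by
  have hU : ∀ (k : Fin n) l m,
      (if (k : ℕ) = 0 then clockZ d ^ ((j k : ℕ)) else shiftX d ^ ((j k : ℕ))) l m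
        = if l = (if k = 0 then m else m + j k)
          then (if k = 0 then (clockPhase d ^ (j k : ℕ)) ^ (m : ℕ) else 1) else 0 := by
    intro k l m
    by_cases hk : k = 0 <;> simp [hk, clockZ_pow_apply, shiftX_pow_apply]
  funext x
  rw [ghzBasisVec, kronPow_mulVec_GHZ]
  refine sum_congr rfl fun c _ => ?_
  rw [kronPow_apply_of_monomial _ _ hU, Fintype.prod_ite_eq', mul_ite, mul_zero]
  rfl

theorem ghzBranch_eq_ghzBranch_iff [NeZero n] {j j' : Fin n → Fin d} {c c' : Fin d} :
    ghzBranch j c = ghzBranch j' c' ↔ c = c' ∧ ∀ k, k ≠ 0 → j k = j' k := by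
  constructor
  · intro h
    have hc : c = c' := by simpa [ghzBranch] using congrFun h 0
    refine ⟨hc, fun k hk => ?_⟩
    simpa [ghzBranch, hk, hc] using congrFun h k
  · rintro ⟨rfl, h⟩
    funext k
    by_cases hk : k = 0 <;> simp [ghzBranch, hk, h]

theorem ghzBasisVec_orthonormal [NeZero n] [NeZero d] (j j' : Fin n → Fin d) :
    star (ghzBasisVec n d j) ⬝ᵥ ghzBasisVec n d j' = if j = j' then 1 else 0 := by
  rw [ghzBasisVec_eq, ghzBasisVec_eq, star_sum_ite_dotProduct_sum_ite]
  by_cases htail : ∀ k, k ≠ 0 → j k = j' k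
  · have hjj' : j = j' ↔ j 0 = j' 0 := by
      refine ⟨fun h => h ▸ rfl, fun h0 => funext fun k => ?_⟩
      by_cases hk : k = 0
      · exact hk ▸ h0
      · exact htail k hk
    have hbranch : ∀ c c', ghzBranch j c = ghzBranch j' c' ↔ c = c' := fun c c' => by
      rw [ghzBranch_eq_ghzBranch_iff, and_iff_left htail]
    have hterm : ∀ a b c : ℕ,
        star ((Real.sqrt d : ℂ)⁻¹ * (clockPhase d ^ a) ^ c) *
            ((Real.sqrt d : ℂ)⁻¹ * (clockPhase d ^ b) ^ c)
          = (d : ℂ)⁻¹ * (star ((clockPhase d ^ a) ^ c) * (clockPhase d ^ b) ^ c) := by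
      intro a b c
      rw [star_mul', mul_mul_mul_comm, star_inv₀, Complex.star_def, Complex.conj_ofReal, ← mul_inv,
        ← Complex.ofReal_mul, Real.mul_self_sqrt d.cast_nonneg, Complex.ofReal_natCast]
    simp only [hbranch, sum_ite_eq, mem_univ, if_true, hterm, ← mul_sum,
      (clockPhase_isPrimitiveRoot d).sum_star_pow_mul_pow, hjj']
    split_ifs <;> simp [NeZero.ne d]
  · have hjj' : j ≠ j' := fun h => htail fun k _ => h ▸ rfl
    simp [ghzBranch_eq_ghzBranch_iff, htail, hjj']

end GHZBasis

/-- The `d^n` vectors `(Z_d^{j₁} ⊗ X_d^{j₂} ⊗ ⋯ ⊗ X_d^{jₙ}) · GHZ_{n,d}`, indexed by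
`(j₁,…,jₙ) ∈ {0,…,d-1}^n`, form an orthonormal basis of `(ℂ^d)^{⊗n} ≅ ℂ^{d^n}`. -/
theorem stmt18 (n d : ℕ) (hn : 1 ≤ n) (hd : 1 ≤ d) :
    IsONBasis (fun j : Fin n → Fin d =>
      kronPow (fun k => if (k : ℕ) = 0 then clockZ d ^ ((j k : ℕ)) else shiftX d ^ ((j k : ℕ)))
        *ᵥ GHZ n d) := by
  have : NeZero n := ⟨by omega⟩
  have : NeZero d := ⟨by omega⟩
  exact isONBasis_of_card_eq ghzBasisVec_orthonormal rfl
end
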